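/- arXiv:2506.10830 — 8 statements merged into one kernel-verified Lean document; each statement's English description precedes it below -/
import Mathlib

section
/- If x is a nonzero element of the Witt algebra W such that the adjoint action ad x is diagonalizable on W (i.e., W decomposes as a direct sum of eigenspaces of ad x), then x = ξ L_0 for some nonzero scalar ξ ∈ ℂ*. -/
/-!
Suppose the support of `x` in the basis `L` has top index `M > 0`. For an eigenvector `v` of
`ad x` whose support has top index `N > M`, the coefficient of `⁅x, v⁆` at `M + N` is
`x_M v_N (M - N) ≠ 0`, while that of `μ • v` vanishes since `M + N > N`. So no eigenvector, hence
nothing in their span, has a component along `L (M + 1)`, contradicting diagonalizability.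
Applying this to the basis `m ↦ -L (-m)` bounds the support from below as well, so the support
of `x` is `{0}`.
-/

namespace Module.Basis

variable {R M : Type*} [Ring R] [AddCommGroup M] [Module R M] (b : Module.Basis ℤ R M)

noncomputable def reflect : Module.Basis ℤ R M :=
  (b.map (LinearEquiv.neg R)).reindex (Equiv.neg ℤ)

@[simp]
theorem reflect_apply (m : ℤ) : b.reflect m = -b (-m) := by
  simp [reflect]

@[simp]
theorem reflect_repr_apply (x : M) (m : ℤ) : b.reflect.repr x m = -b.repr x (-m) := by
  rw [reflect, repr_reindex_apply]
  simp [map_repr]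

end Module.Basis

def IsWittBasis {K W : Type*} [CommRing K] [LieRing W] [LieAlgebra K W]
    (L : Module.Basis ℤ K W) : Prop :=
  ∀ m n : ℤ, ⁅L m, L n⁆ = ((m - n : ℤ) : K) • L (m + n)

namespace IsWittBasis

section CommRing

variable {K W : Type*} [CommRing K] [LieRing W] [LieAlgebra K W] {L : Module.Basis ℤ K W}

theorem repr_lie_apply (hL : IsWittBasis L) (x v : W) (k : ℤ) :
    L.repr ⁅x, v⁆ k = ∑ m ∈ (L.repr x).support, ∑ n ∈ (L.repr v).support,
      if m + n = k then L.repr x m * L.repr v n * ((m - n : ℤ) : K) else 0 := by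
  conv_lhs => rw [← L.linearCombination_repr x, ← L.linearCombination_repr v]
  simp only [Finsupp.linearCombination_apply, Finsupp.sum, sum_lie_sum, smul_lie, lie_smul,
    show ∀ m n, _ from hL, map_sum, map_smul, L.repr_self, Finsupp.coe_finsetSum, Finset.sum_apply,
    Finsupp.smul_apply, Finsupp.single_apply, smul_eq_mul]
  refine Finset.sum_congr rfl fun m _ => Finset.sum_congr rfl fun n _ => ?_
  split_ifs <;> ring

theorem repr_lie_add_of_le (hL : IsWittBasis L) {x v : W} {M N : ℤ}
    (hx : ∀ m ∈ (L.repr x).support, m ≤ M) (hv : ∀ n ∈ (L.repr v).support, n ≤ N) :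
    L.repr ⁅x, v⁆ (M + N) = L.repr x M * L.repr v N * ((M - N : ℤ) : K) := by
  rw [hL.repr_lie_apply]
  have hterm : ∀ m ∈ (L.repr x).support, ∀ n ∈ (L.repr v).support,
      (if m + n = M + N then L.repr x m * L.repr v n * ((m - n : ℤ) : K) else 0) =
        if m = M ∧ n = N then L.repr x M * L.repr v N * ((M - N : ℤ) : K) else 0 := by
    intro m hm n hn
    have := hx m hm
    have := hv n hn
    by_cases h : m = M ∧ n = N
    · obtain ⟨rfl, rfl⟩ := h
      simp
    · rw [if_neg (by omega), if_neg h]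
  rw [Finset.sum_congr rfl fun m hm => Finset.sum_congr rfl (hterm m hm)]
  simp only [ite_and, Finset.sum_ite_irrel, Finset.sum_const_zero, Finset.sum_ite_eq',
    Finsupp.mem_support_iff]
  split_ifs <;> simp_all

theorem reflect (hL : IsWittBasis L) : IsWittBasis L.reflect := by
  intro m n
  rw [Module.Basis.reflect_apply, Module.Basis.reflect_apply, Module.Basis.reflect_apply, neg_lie,
    lie_neg, neg_neg, hL, smul_neg, ← neg_smul, neg_add]
  congr 1
  push_cast
  ring

end CommRing

section Eigenspaces

variable {K W : Type*} [CommRing K] [IsDomain K] [CharZero K] [LieRing W] [LieAlgebra K W]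
  {L : Module.Basis ℤ K W}

theorem repr_eq_zero_of_mem_eigenspace (hL : IsWittBasis L) {x v : W} {μ : K} {M n : ℤ}
    (hM : 0 < M) (hxM : L.repr x M ≠ 0) (hx : ∀ m ∈ (L.repr x).support, m ≤ M)
    (hv : v ∈ (LieAlgebra.ad K W x).eigenspace μ) (hn : M < n) : L.repr v n = 0 := by
  by_contra hvn
  set N := (L.repr v).support.max' ⟨n, Finsupp.mem_support_iff.2 hvn⟩
  have hvN : ∀ k ∈ (L.repr v).support, k ≤ N := fun k hk => Finset.le_max' _ k hk
  have hnN : n ≤ N := hvN n (Finsupp.mem_support_iff.2 hvn)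
  have hvN_ne : L.repr v N ≠ 0 := Finsupp.mem_support_iff.1 (Finset.max'_mem _ _)
  have hv_above : L.repr v (M + N) = 0 :=
    Finsupp.notMem_support_iff.1 fun h => by have := hvN _ h; omega
  have hlie : ⁅x, v⁆ = μ • v := by
    simpa only [LieAlgebra.ad_apply] using Module.End.mem_eigenspace_iff.1 hv
  have hcoeff := hL.repr_lie_add_of_le hx hvN
  rw [hlie, map_smul, Finsupp.smul_apply, hv_above, smul_zero] at hcoeff
  exact mul_ne_zero (mul_ne_zero hxM hvN_ne) (Int.cast_ne_zero.2 (by omega)) hcoeff.symm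

theorem support_nonpos (hL : IsWittBasis L) {x : W}
    (hdiag : (⨆ μ : K, (LieAlgebra.ad K W x).eigenspace μ) = ⊤) :
    ∀ m ∈ (L.repr x).support, m ≤ 0 := by
  by_contra! h
  obtain ⟨m, hm, hm_pos⟩ := h
  set M := (L.repr x).support.max' ⟨m, hm⟩
  have hxM : L.repr x M ≠ 0 := Finsupp.mem_support_iff.1 (Finset.max'_mem _ _)
  have hx : ∀ k ∈ (L.repr x).support, k ≤ M := fun k hk => Finset.le_max' _ k hk
  have hM : 0 < M := hm_pos.trans_le (hx m hm)
  have hle : (⨆ μ : K, (LieAlgebra.ad K W x).eigenspace μ) ≤ LinearMap.ker (L.coord (M + 1)) :=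
    iSup_le fun μ v hv => hL.repr_eq_zero_of_mem_eigenspace hM hxM hx hv (lt_add_one M)
  have hL_top := hle (hdiag ▸ Submodule.mem_top : L (M + 1) ∈ _)
  simp at hL_top

-- `L m ↦ -L (-m)` is an automorphism of the Witt algebra exchanging top and bottom of supports.
theorem support_nonneg (hL : IsWittBasis L) {x : W}
    (hdiag : (⨆ μ : K, (LieAlgebra.ad K W x).eigenspace μ) = ⊤) :
    ∀ m ∈ (L.repr x).support, 0 ≤ m := by
  intro m hm
  have hneg : -m ∈ (L.reflect.repr x).support := by simpa using hm
  simpa using hL.reflect.support_nonpos hdiag (-m) hneg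

end Eigenspaces

end IsWittBasis

/-- If `x ≠ 0` in the Witt algebra and `ad x` is diagonalizable (the eigenspaces
of `ad x` span the whole algebra), then `x = ξ • L 0` for some nonzero `ξ`. -/
theorem witt_ad_diagonalizable {W : Type*} [LieRing W] [LieAlgebra ℂ W]
    (L : Module.Basis ℤ ℂ W)
    (hW : ∀ m n : ℤ, ⁅L m, L n⁆ = ((m - n : ℤ) : ℂ) • L (m + n))
    (x : W) (hx : x ≠ 0)
    (hdiag : (⨆ μ : ℂ, Module.End.eigenspace (LieAlgebra.ad ℂ W x) μ) = ⊤) :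
    ∃ ξ : ℂ, ξ ≠ 0 ∧ x = ξ • L 0 := by
  have hL : IsWittBasis L := hW
  have hsupp : (L.repr x).support ⊆ {0} := fun m hm => Finset.mem_singleton.2 <|
    le_antisymm (hL.support_nonpos hdiag m hm) (hL.support_nonneg hdiag m hm)
  have hx_eq : x = L.repr x 0 • L 0 := by
    rw [← L.repr_symm_single, ← Finsupp.support_subset_singleton.1 hsupp, L.repr.symm_apply_apply]
  refine ⟨L.repr x 0, fun h => hx ?_, hx_eq⟩
  rw [hx_eq, h, zero_smul]
end

section
/- The center of the Lie algebra L is the two-dimensional space ℂh_0 ⊕ ℂc. -/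
/-!
`c` is central by assumption and `h₀` because `ad h₀` vanishes on the basis. Conversely, for
a central `x` the `h_{m+1}`-coordinate of `⁅h₁, x⁆ = 0` is the `d_m`-coordinate of `x`, so `x`
has no `d`-component; the `h_n`-coordinate of `⁅d₀, x⁆ = 0` is then `-n` times the
`h_n`-coordinate of `x`, so only `h₀` and `c` survive. The two basis vectors span a plane.
-/

/-- Index type for the basis of the deformed Heisenberg–Virasoro algebra `L`:
elements `d m`, `h n` (`m n : ℤ`) and the central element `c`. -/
inductive DHVIdx : Type
  | d : ℤ → DHVIdx
  | h : ℤ → DHVIdx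
  | c : DHVIdx

theorem Module.Basis.finrank_span_image {R M ι : Type*} [Ring R] [Nontrivial R]
    [StrongRankCondition R] [AddCommGroup M] [Module R M] (b : Module.Basis ι R M)
    (s : Finset ι) :
    Module.finrank R (Submodule.span R (b '' s)) = s.card := by
  have hli : LinearIndependent R (b ∘ ((↑) : ↥(s : Set ι) → ι)) :=
    b.linearIndependent.comp _ Subtype.val_injective
  rw [← Subtype.range_coe (s := (s : Set ι)), ← Set.range_comp, finrank_span_eq_card hli]
  simp

namespace DHVIdx

open LieAlgebra Module

variable {g : Type*} [LieRing g] [LieAlgebra ℂ g] (B : Basis DHVIdx ℂ g)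

theorem lie_basis_c_eq_zero (hcen : ∀ x : g, ⁅x, B c⁆ = 0) (y : g) : ⁅B c, y⁆ = 0 := by
  rw [← lie_skew, hcen, neg_zero]

theorem lie_basis_h_zero_eq_zero
    (hdh : ∀ m n : ℤ, ⁅B (d m), B (h n)⁆ = ((-n : ℤ) : ℂ) • B (h (m + n)))
    (hhh : ∀ m n : ℤ, ⁅B (h m), B (h n)⁆ = 0) (hcen : ∀ x : g, ⁅x, B c⁆ = 0) (y : g) :
    ⁅B (h 0), y⁆ = 0 := by
  have had : ad ℂ g (B (h 0)) = 0 := B.ext fun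
    | d m => by rw [ad_apply, ← lie_skew, hdh]; simp
    | h n => by rw [ad_apply, hhh]; rfl
    | c => by rw [ad_apply, hcen]; rfl
  simpa using LinearMap.congr_fun had y

theorem coord_h_succ_comp_ad_h_one
    (hdh : ∀ m n : ℤ, ⁅B (d m), B (h n)⁆ = ((-n : ℤ) : ℂ) • B (h (m + n)))
    (hhh : ∀ m n : ℤ, ⁅B (h m), B (h n)⁆ = 0) (hcen : ∀ x : g, ⁅x, B c⁆ = 0)
    (m : ℤ) :
    B.coord (h (m + 1)) ∘ₗ ad ℂ g (B (h 1)) = B.coord (d m) := by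
  classical
  refine B.ext fun i => ?_
  cases i with
  | d k =>
    rw [LinearMap.comp_apply, ad_apply, ← lie_skew, hdh]
    simp [Finsupp.single_apply]
  | h k => simp [hhh]
  | c => simp [hcen]

theorem coord_h_comp_ad_d_zero
    (hdd : ∀ m n : ℤ, ⁅B (d m), B (d n)⁆ =
      ((m - n : ℤ) : ℂ) • B (d (m + n)) + ((m - n : ℤ) : ℂ) • B (h (m + n)) +
      (if m + n = 0 then ((m : ℂ) ^ 3 - (m : ℂ)) / 12 else 0) • B c)
    (hdh : ∀ m n : ℤ, ⁅B (d m), B (h n)⁆ = ((-n : ℤ) : ℂ) • B (h (m + n)))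
    (hcen : ∀ x : g, ⁅x, B c⁆ = 0) (n : ℤ) :
    B.coord (h n) ∘ₗ ad ℂ g (B (d 0)) = (-n : ℂ) • (B.coord (h n) + B.coord (d n)) := by
  classical
  refine B.ext fun i => ?_
  cases i with
  | d k =>
    rw [LinearMap.comp_apply, ad_apply, hdd]
    by_cases hk : k = n
    · subst hk; simp
    · simp [Ne.symm hk]
  | h k =>
    rw [LinearMap.comp_apply, ad_apply, hdh]
    by_cases hk : k = n
    · subst hk; simp
    · simp [Ne.symm hk]
  | c => simp [hcen]

theorem repr_support_subset_of_forall_lie_eq_zero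
    (hdd : ∀ m n : ℤ, ⁅B (d m), B (d n)⁆ =
      ((m - n : ℤ) : ℂ) • B (d (m + n)) + ((m - n : ℤ) : ℂ) • B (h (m + n)) +
      (if m + n = 0 then ((m : ℂ) ^ 3 - (m : ℂ)) / 12 else 0) • B c)
    (hdh : ∀ m n : ℤ, ⁅B (d m), B (h n)⁆ = ((-n : ℤ) : ℂ) • B (h (m + n)))
    (hhh : ∀ m n : ℤ, ⁅B (h m), B (h n)⁆ = 0) (hcen : ∀ x : g, ⁅x, B c⁆ = 0)
    {x : g} (hx : ∀ y : g, ⁅x, y⁆ = 0) :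
    ↑(B.repr x).support ⊆ ({h 0, c} : Set DHVIdx) := by
  have hx' (y : g) : ⁅y, x⁆ = 0 := by rw [← lie_skew, hx, neg_zero]
  have hd (m : ℤ) : B.repr x (d m) = 0 := by
    simpa [hx'] using (LinearMap.congr_fun (coord_h_succ_comp_ad_h_one B hdh hhh hcen m) x).symm
  have hh (n : ℤ) (hn : n ≠ 0) : B.repr x (h n) = 0 := by
    simpa [hx', hd, hn] using LinearMap.congr_fun (coord_h_comp_ad_d_zero B hdd hdh hcen n) x
  intro i hi
  rw [SetLike.mem_coe, Finsupp.mem_support_iff] at hi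
  cases i with
  | d m => exact absurd (hd m) hi
  | h n =>
    by_cases hn : n = 0
    · simp [hn]
    · exact absurd (hh n hn) hi
  | c => simp

end DHVIdx

/-- The center of the deformed Heisenberg–Virasoro algebra is the
two-dimensional space `ℂ h₀ ⊕ ℂ c`. -/
theorem dhv_center {g : Type*} [LieRing g] [LieAlgebra ℂ g]
    (B : Module.Basis DHVIdx ℂ g)
    (hdd : ∀ m n : ℤ, ⁅B (DHVIdx.d m), B (DHVIdx.d n)⁆ =
      ((m - n : ℤ) : ℂ) • B (DHVIdx.d (m + n)) +
      ((m - n : ℤ) : ℂ) • B (DHVIdx.h (m + n)) +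
      (if m + n = 0 then ((m : ℂ) ^ 3 - (m : ℂ)) / 12 else 0) • B DHVIdx.c)
    (hdh : ∀ m n : ℤ, ⁅B (DHVIdx.d m), B (DHVIdx.h n)⁆ =
      ((-n : ℤ) : ℂ) • B (DHVIdx.h (m + n)))
    (hhh : ∀ m n : ℤ, ⁅B (DHVIdx.h m), B (DHVIdx.h n)⁆ = 0)
    (hcen : ∀ x : g, ⁅x, B DHVIdx.c⁆ = 0) :
    {x : g | ∀ y : g, ⁅x, y⁆ = 0} =
      (Submodule.span ℂ ({B (DHVIdx.h 0), B DHVIdx.c} : Set g) : Set g) ∧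
    Module.finrank ℂ
      (Submodule.span ℂ ({B (DHVIdx.h 0), B DHVIdx.c} : Set g)) = 2 := by
  classical
  have hspan : ({B (DHVIdx.h 0), B DHVIdx.c} : Set g) =
      B '' ↑({DHVIdx.h 0, DHVIdx.c} : Finset DHVIdx) := by
    simp [Set.image_pair]
  refine ⟨Set.ext fun x => ⟨fun hx => ?_, fun hx y => ?_⟩, ?_⟩
  · rw [SetLike.mem_coe, hspan, B.mem_span_image, Finset.coe_pair]
    exact DHVIdx.repr_support_subset_of_forall_lie_eq_zero B hdd hdh hhh hcen hx
  · obtain ⟨a, b, rfl⟩ := Submodule.mem_span_pair.mp hx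
    simp [add_lie, smul_lie, DHVIdx.lie_basis_h_zero_eq_zero B hdh hhh hcen,
      DHVIdx.lie_basis_c_eq_zero B hcen]
  · rw [hspan, B.finrank_span_image, Finset.card_pair (by simp)]
end

section
/- The subspace I of L spanned by {h_m, c | m ∈ ℤ} is an ideal of L, and it is the unique maximal (proper) ideal of L. -/
/-!
`I` is abelian, and modulo `I` the algebra is the Witt algebra. On the `d`-coordinates `ad d₀`
acts diagonally with the pairwise distinct eigenvalues `-n`, so a polynomial in `ad d₀` isolates
a single `d k` modulo `I` inside any ideal `J ⊄ I`; the Witt brackets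
`[d m, d k] ≡ (m - k) d (m + k)` then give `J + I = L`. As `I` is abelian,
`[L, L] = [J + I, J + I] ⊆ J`, and `L` is perfect, so `J = L`.
-/

theorem LieIdeal.top_lie_top_le_of_sup_eq_top {R L : Type*} [CommRing R] [LieRing L]
    [LieAlgebra R L] {I J : LieIdeal R L} (hI : ⁅I, I⁆ = ⊥) (h : J ⊔ I = ⊤) :
    ⁅(⊤ : LieIdeal R L), ⊤⁆ ≤ J := by
  rw [← h, LieSubmodule.sup_lie, LieSubmodule.lie_sup, LieSubmodule.lie_sup, hI, sup_bot_eq]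
  exact sup_le (sup_le (LieSubmodule.lie_le_right J J) (LieSubmodule.lie_le_left J I))
    (LieSubmodule.lie_le_right J I)

namespace DHV

variable {g : Type*} [LieRing g] [LieAlgebra ℂ g] (B : Module.Basis DHVIdx ℂ g)

def HasDDBracket : Prop :=
  ∀ m n : ℤ, ⁅B (.d m), B (.d n)⁆ =
    ((m - n : ℤ) : ℂ) • B (.d (m + n)) + ((m - n : ℤ) : ℂ) • B (.h (m + n)) +
      (if m + n = 0 then ((m : ℂ) ^ 3 - (m : ℂ)) / 12 else 0) • B .c

def hcSpan : Submodule ℂ g :=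
  Submodule.span ℂ ((Set.range fun n : ℤ => B (.h n)) ∪ {B .c})

variable {B}

theorem h_mem_hcSpan (n : ℤ) : B (.h n) ∈ hcSpan B :=
  Submodule.subset_span (Or.inl ⟨n, rfl⟩)

theorem c_mem_hcSpan : B .c ∈ hcSpan B :=
  Submodule.subset_span (Or.inr rfl)

theorem mem_hcSpan_iff {x : g} : x ∈ hcSpan B ↔ ∀ m : ℤ, B.repr x (.d m) = 0 := by
  have hset : (Set.range fun n : ℤ => B (.h n)) ∪ {B .c} = B '' (Set.range .h ∪ {.c}) := by
    rw [Set.image_union, Set.image_singleton, ← Set.range_comp]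
    rfl
  rw [hcSpan, hset, Module.Basis.mem_span_image]
  constructor
  · intro hsub m
    by_contra hne
    simpa using hsub (Finsupp.mem_support_iff.2 hne)
  · rintro hd (m | n | _) hi
    · exact absurd (hd m) (Finsupp.mem_support_iff.1 hi)
    · exact Or.inl ⟨n, rfl⟩
    · exact Or.inr rfl

theorem lie_mem_hcSpan
    (hdh : ∀ m n : ℤ, ⁅B (.d m), B (.h n)⁆ = ((-n : ℤ) : ℂ) • B (.h (m + n)))
    (hhh : ∀ m n : ℤ, ⁅B (.h m), B (.h n)⁆ = 0) (hcen : ∀ x : g, ⁅x, B .c⁆ = 0)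
    {x : g} (hx : x ∈ hcSpan B) (y : g) : ⁅y, x⁆ ∈ hcSpan B := by
  induction B.mem_span y, hx using Submodule.span_induction₂ with
  | mem_mem y x hy hx =>
    obtain ⟨i, rfl⟩ := hy
    rcases hx with ⟨n, rfl⟩ | rfl
    · rcases i with m | m | _
      · exact hdh m n ▸ Submodule.smul_mem _ _ (h_mem_hcSpan _)
      · exact hhh m n ▸ Submodule.zero_mem _
      · rw [← lie_skew, hcen, neg_zero]
        exact Submodule.zero_mem _
    · exact hcen _ ▸ Submodule.zero_mem _
  | zero_left => simp
  | zero_right => simp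
  | add_left _ _ _ _ _ _ h₁ h₂ => rw [add_lie]; exact add_mem h₁ h₂
  | add_right _ _ _ _ _ _ h₁ h₂ => rw [lie_add]; exact add_mem h₁ h₂
  | smul_left r _ _ _ _ h => rw [smul_lie]; exact Submodule.smul_mem _ r h
  | smul_right r _ _ _ _ h => rw [lie_smul]; exact Submodule.smul_mem _ r h

theorem lie_eq_zero_of_mem_hcSpan
    (hhh : ∀ m n : ℤ, ⁅B (.h m), B (.h n)⁆ = 0) (hcen : ∀ x : g, ⁅x, B .c⁆ = 0)
    {x y : g} (hx : x ∈ hcSpan B) (hy : y ∈ hcSpan B) : ⁅x, y⁆ = 0 := by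
  induction hx, hy using Submodule.span_induction₂ with
  | mem_mem x y hx hy =>
    rcases hy with ⟨n, rfl⟩ | rfl
    · rcases hx with ⟨m, rfl⟩ | rfl
      · exact hhh m n
      · rw [← lie_skew, hcen, neg_zero]
    · exact hcen x
  | zero_left => exact zero_lie _
  | zero_right => exact lie_zero _
  | add_left _ _ _ _ _ _ h₁ h₂ => rw [add_lie, h₁, h₂, add_zero]
  | add_right _ _ _ _ _ _ h₁ h₂ => rw [lie_add, h₁, h₂, add_zero]
  | smul_left r _ _ _ _ h => rw [smul_lie, h, smul_zero]
  | smul_right r _ _ _ _ h => rw [lie_smul, h, smul_zero]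

def hcIdeal (hdh : ∀ m n : ℤ, ⁅B (.d m), B (.h n)⁆ = ((-n : ℤ) : ℂ) • B (.h (m + n)))
    (hhh : ∀ m n : ℤ, ⁅B (.h m), B (.h n)⁆ = 0) (hcen : ∀ x : g, ⁅x, B .c⁆ = 0) :
    LieIdeal ℂ g where
  toSubmodule := hcSpan B
  lie_mem hx := lie_mem_hcSpan hdh hhh hcen hx _

theorem repr_lie_d_zero_d (hdd : HasDDBracket B)
    (hdh : ∀ m n : ℤ, ⁅B (.d m), B (.h n)⁆ = ((-n : ℤ) : ℂ) • B (.h (m + n)))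
    (hcen : ∀ x : g, ⁅x, B .c⁆ = 0) (y : g) (n : ℤ) :
    B.repr ⁅B (.d 0), y⁆ (.d n) = -n * B.repr y (.d n) := by
  have h : B.coord (.d n) ∘ₗ LieAlgebra.ad ℂ g (B (.d 0)) =
      (-(n : ℂ)) • B.coord (.d n) := by
    refine B.ext fun i => ?_
    rcases i with j | j | _
    · by_cases hj : j = n
      · subst hj
        simp [hdd 0 j]
      · simp [hdd 0 j, hj]
    · simp [hdh 0 j]
    · simp [hcen]
  simpa using LinearMap.congr_fun h y

theorem exists_repr_d_eq_prod_mul (hdd : HasDDBracket B)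
    (hdh : ∀ m n : ℤ, ⁅B (.d m), B (.h n)⁆ = ((-n : ℤ) : ℂ) • B (.h (m + n)))
    (hcen : ∀ x : g, ⁅x, B .c⁆ = 0) (J : LieIdeal ℂ g) {x : g} (hx : x ∈ J)
    (T : Finset ℤ) :
    ∃ y ∈ J, ∀ n : ℤ, B.repr y (.d n) = (∏ m ∈ T, ((m : ℂ) - n)) * B.repr x (.d n) := by
  induction T using Finset.induction_on with
  | empty => exact ⟨x, hx, fun n => by simp⟩
  | insert a T haT ih =>
    obtain ⟨y, hyJ, hy⟩ := ih
    refine ⟨⁅B (.d 0), y⁆ + (a : ℂ) • y, add_mem (J.lie_mem hyJ) (J.smul_mem _ hyJ),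
      fun n => ?_⟩
    rw [map_add, map_smul, Finsupp.add_apply, Finsupp.smul_apply,
      repr_lie_d_zero_d hdd hdh hcen, hy n, Finset.prod_insert haT, smul_eq_mul]
    ring

theorem exists_d_mem_sup_hcSpan (hdd : HasDDBracket B)
    (hdh : ∀ m n : ℤ, ⁅B (.d m), B (.h n)⁆ = ((-n : ℤ) : ℂ) • B (.h (m + n)))
    (hcen : ∀ x : g, ⁅x, B .c⁆ = 0) (J : LieIdeal ℂ g) {x : g} (hxJ : x ∈ J)
    (hxI : x ∉ hcSpan B) : ∃ k : ℤ, B (.d k) ∈ J.toSubmodule ⊔ hcSpan B := by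
  obtain ⟨k, hk⟩ : ∃ k : ℤ, B.repr x (.d k) ≠ 0 := by
    simpa [mem_hcSpan_iff] using hxI
  let T := ((B.repr x).support.preimage DHVIdx.d fun _ _ _ _ => DHVIdx.d.inj).erase k
  obtain ⟨y, hyJ, hy⟩ := exists_repr_d_eq_prod_mul hdd hdh hcen J hxJ T
  have hyk : B.repr y (.d k) ≠ 0 := by
    rw [hy k]
    refine mul_ne_zero (Finset.prod_ne_zero_iff.2 fun m hm h0 => ?_) hk
    exact (Finset.mem_erase.1 hm).1 (by exact_mod_cast sub_eq_zero.1 h0)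
  have hrest : y - B.repr y (.d k) • B (.d k) ∈ hcSpan B := by
    refine mem_hcSpan_iff.2 fun n => ?_
    by_cases hn : n = k
    · simp [hn]
    · by_cases hxn : B.repr x (.d n) = 0
      · simp [hy n, hxn, Ne.symm hn]
      · have hT : n ∈ T :=
          Finset.mem_erase.2 ⟨hn, Finset.mem_preimage.2 (Finsupp.mem_support_iff.2 hxn)⟩
        simp [hy n, Finset.prod_eq_zero hT, Ne.symm hn]
  refine ⟨k, (Submodule.smul_mem_iff _ hyk).1 ?_⟩
  rw [← sub_sub_cancel y (B.repr y (.d k) • B (.d k))]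
  exact sub_mem (Submodule.mem_sup_left hyJ) (Submodule.mem_sup_right hrest)

theorem d_add_mem (hdd : HasDDBracket B) {K : LieIdeal ℂ g} (hK : hcSpan B ≤ K.toSubmodule)
    {a b : ℤ} (ha : B (.d a) ∈ K) (hab : a ≠ b) : B (.d (a + b)) ∈ K := by
  have h := K.lie_mem (x := B (.d b)) ha
  rw [hdd b a, add_comm b a] at h
  change _ ∈ K.toSubmodule at h
  rwa [Submodule.add_mem_iff_left _ (hK (Submodule.smul_mem _ _ c_mem_hcSpan)),
    Submodule.add_mem_iff_left _ (hK (Submodule.smul_mem _ _ (h_mem_hcSpan _))),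
    Submodule.smul_mem_iff _ (by exact_mod_cast sub_ne_zero.2 hab.symm)] at h

theorem eq_top_of_d_mem (hdd : HasDDBracket B) {K : LieIdeal ℂ g}
    (hK : hcSpan B ≤ K.toSubmodule) {k : ℤ} (hk : B (.d k) ∈ K) : K = ⊤ := by
  have hd : ∀ p, B (.d p) ∈ K := by
    intro p
    by_cases hp : p = 2 * k
    · -- `4k + 1` is odd, so it is neither `k` nor `2k`
      have h := d_add_mem hdd hK (d_add_mem hdd hK hk (b := 3 * k + 1) (by omega))
        (b := -2 * k - 1) (by omega)
      rwa [show k + (3 * k + 1) + (-2 * k - 1) = p by omega] at h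
    · simpa using d_add_mem hdd hK hk (b := p - k) (by omega)
  rw [← LieSubmodule.toSubmodule_eq_top]
  refine (Submodule.eq_top_iff_forall_basis_mem B).2 ?_
  rintro (p | n | _)
  · exact hd p
  · exact hK (h_mem_hcSpan n)
  · exact hK c_mem_hcSpan

theorem top_lie_top_eq_top (hdd : HasDDBracket B)
    (hdh : ∀ m n : ℤ, ⁅B (.d m), B (.h n)⁆ = ((-n : ℤ) : ℂ) • B (.h (m + n))) :
    ⁅(⊤ : LieIdeal ℂ g), (⊤ : LieIdeal ℂ g)⁆ = ⊤ := by
  set D : Submodule ℂ g :=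
    LieSubmodule.toSubmodule ⁅(⊤ : LieIdeal ℂ g), (⊤ : LieIdeal ℂ g)⁆
  have hlie (x y : g) : ⁅x, y⁆ ∈ D :=
    LieSubmodule.lie_mem_lie (LieSubmodule.mem_top x) (LieSubmodule.mem_top y)
  have hh (j : ℤ) : B (.h j) ∈ D := by
    have h := hlie (B (.d (j - 1))) (B (.h 1))
    rwa [hdh, sub_add_cancel, Submodule.smul_mem_iff _ (by norm_num)] at h
  have hd (m : ℤ) (hm : m ≠ 0) : B (.d m) ∈ D := by
    have h := hlie (B (.d m)) (B (.d 0))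
    rwa [hdd, if_neg (by simpa using hm), zero_smul, add_zero, add_zero,
      Submodule.add_mem_iff_left _ (Submodule.smul_mem _ _ (hh _)),
      Submodule.smul_mem_iff _ (by simpa using hm)] at h
  have hd₀ : B (.d 0) ∈ D := by
    have h : (2 : ℂ) • B (.d 0) + (2 : ℂ) • B (.h 0) ∈ D := by
      convert hlie (B (.d 1)) (B (.d (-1))) using 1
      rw [hdd]
      norm_num
    rwa [Submodule.add_mem_iff_left _ (Submodule.smul_mem _ _ (hh 0)),
      Submodule.smul_mem_iff _ two_ne_zero] at h
  have hc : B .c ∈ D := by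
    have h : (4 : ℂ) • B (.d 0) + (4 : ℂ) • B (.h 0) + (1 / 2 : ℂ) • B .c ∈ D := by
      convert hlie (B (.d 2)) (B (.d (-2))) using 1
      rw [hdd]
      norm_num
    rwa [Submodule.add_mem_iff_right _ (add_mem (Submodule.smul_mem _ _ hd₀)
      (Submodule.smul_mem _ _ (hh 0))), Submodule.smul_mem_iff _ (by norm_num)] at h
  rw [← LieSubmodule.toSubmodule_eq_top]
  refine (Submodule.eq_top_iff_forall_basis_mem B).2 ?_
  rintro (m | n | _)
  · rcases eq_or_ne m 0 with rfl | hm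
    · exact hd₀
    · exact hd m hm
  · exact hh n
  · exact hc

end DHV

/-- The subspace `I` spanned by `{h m, c}` is an ideal of `L`, proper, and every
proper ideal of `L` is contained in `I` (so `I` is the unique maximal proper ideal). -/
theorem dhv_unique_maximal_ideal
 {g : Type*} [LieRing g] [LieAlgebra ℂ g]
    (B : Module.Basis DHVIdx ℂ g)
    (hdd : ∀ m n : ℤ, ⁅B (DHVIdx.d m), B (DHVIdx.d n)⁆ =
      ((m - n : ℤ) : ℂ) • B (DHVIdx.d (m + n)) +
      ((m - n : ℤ) : ℂ) • B (DHVIdx.h (m + n)) +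
      (if m + n = 0 then ((m : ℂ) ^ 3 - (m : ℂ)) / 12 else 0) • B DHVIdx.c)
    (hdh : ∀ m n : ℤ, ⁅B (DHVIdx.d m), B (DHVIdx.h n)⁆ =
      ((-n : ℤ) : ℂ) • B (DHVIdx.h (m + n)))
    (hhh : ∀ m n : ℤ, ⁅B (DHVIdx.h m), B (DHVIdx.h n)⁆ = 0)
    (hcen : ∀ x : g, ⁅x, B DHVIdx.c⁆ = 0)
    (I : Submodule ℂ g)
    (hI : I = Submodule.span ℂ
      ((Set.range fun n : ℤ => B (DHVIdx.h n)) ∪ {B DHVIdx.c})) :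
    (∀ x ∈ I, ∀ y : g, ⁅y, x⁆ ∈ I) ∧ I ≠ ⊤ ∧
      ∀ J : LieIdeal ℂ g, J.toSubmodule ≠ ⊤ → J.toSubmodule ≤ I := by
  change I = DHV.hcSpan B at hI
  subst hI
  refine ⟨fun x hx y => DHV.lie_mem_hcSpan hdh hhh hcen hx y, fun htop => ?_, fun J hJ => ?_⟩
  · simpa using DHV.mem_hcSpan_iff.1 (htop ▸ Submodule.mem_top : B (.d 0) ∈ DHV.hcSpan B) 0
  by_contra hJI
  obtain ⟨x, hxJ, hxI⟩ := SetLike.not_le_iff_exists.1 hJI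
  obtain ⟨k, hk⟩ := DHV.exists_d_mem_sup_hcSpan hdd hdh hcen J hxJ hxI
  let I := DHV.hcIdeal hdh hhh hcen
  have hIab : ⁅I, I⁆ = ⊥ := (LieSubmodule.lie_eq_bot_iff I I).2 fun x hx y hy =>
    DHV.lie_eq_zero_of_mem_hcSpan hhh hcen hx hy
  have hsup : J ⊔ I = ⊤ := DHV.eq_top_of_d_mem hdd (le_sup_right (b := I.toSubmodule)) hk
  exact hJ ((LieSubmodule.toSubmodule_eq_top J).2 (top_le_iff.1
    (DHV.top_lie_top_eq_top hdd hdh ▸ LieIdeal.top_lie_top_le_of_sup_eq_top hIab hsup)))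
end

section
/- In the Lie algebra L, there do not exist nonzero α, β ∈ ℂ*, q ∈ ℤ*, ζ ∈ ℂ*, scalars α_i, β_j (finitely many nonzero) and μ, η ∈ ℂ such that [x, y] = ζ y, where x = α d_0 + Σ_i α_i h_i + μ c and y = β d_q + Σ_j β_j h_j + η c. -/
namespace DHVIdx

variable {g : Type*} [LieRing g] [LieAlgebra ℂ g] (B : Module.Basis DHVIdx ℂ g)

theorem repr_finsuppSum_h_apply_d (f : ℤ →₀ ℂ) (F : ℤ → ℂ → ℂ) (e : ℤ → ℤ) (k : ℤ) :
    B.repr (f.sum fun i a => F i a • B (h (e i))) (d k) = 0 := by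
  simp [map_finsuppSum, Finsupp.sum_apply]

theorem repr_finsuppSum_h_apply_h (f : ℤ →₀ ℂ) (F : ℤ → ℂ → ℂ) (hF : ∀ i, F i 0 = 0)
    (e : ℤ → ℤ) {n k : ℤ} (he : ∀ i, e i = n ↔ i = k) :
    B.repr (f.sum fun i a => F i a • B (h (e i))) (h n) = F k (f k) := by
  classical
  simp only [map_finsuppSum, map_smul, Module.Basis.repr_self, Finsupp.smul_single_one,
    Finsupp.sum_apply, Finsupp.single_apply, h.injEq, he, Finsupp.sum_ite_eq']
  split_ifs with hk
  · rfl
  · rw [Finsupp.notMem_support_iff.mp hk, hF]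

theorem lie_d_finsuppSum_h
    (hdh : ∀ m n : ℤ, ⁅B (d m), B (h n)⁆ = ((-n : ℤ) : ℂ) • B (h (m + n)))
    (m : ℤ) (f : ℤ →₀ ℂ) :
    ⁅B (d m), f.sum fun i a => a • B (h i)⁆ = f.sum fun i a => (-i * a) • B (h (m + i)) := by
  simp only [Finsupp.sum, lie_sum, lie_smul, hdh, smul_smul, Int.cast_neg, mul_comm]

theorem lie_finsuppSum_h_finsuppSum_h (hhh : ∀ m n : ℤ, ⁅B (h m), B (h n)⁆ = 0)
    (f f' : ℤ →₀ ℂ) :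
    ⁅f.sum fun i a => a • B (h i), f'.sum fun j b => b • B (h j)⁆ = 0 := by
  simp [Finsupp.sum, sum_lie, lie_sum, hhh]

theorem lie_d_zero_d
    (hdd : ∀ m n : ℤ, ⁅B (d m), B (d n)⁆ =
      ((m - n : ℤ) : ℂ) • B (d (m + n)) + ((m - n : ℤ) : ℂ) • B (h (m + n)) +
      (if m + n = 0 then ((m : ℂ) ^ 3 - (m : ℂ)) / 12 else 0) • B c) (n : ℤ) :
    ⁅B (d 0), B (d n)⁆ = (-n : ℂ) • B (d n) + (-n : ℂ) • B (h n) := by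
  simpa using hdd 0 n

theorem lie_d_add_sum_h_add_c (hhh : ∀ m n : ℤ, ⁅B (h m), B (h n)⁆ = 0)
    (hcen : ∀ x : g, ⁅x, B c⁆ = 0) (α β μ η : ℂ) (m n : ℤ) (f f' : ℤ →₀ ℂ) :
    ⁅α • B (d m) + (f.sum fun i a => a • B (h i)) + μ • B c,
      β • B (d n) + (f'.sum fun j b => b • B (h j)) + η • B c⁆ =
      (α * β) • ⁅B (d m), B (d n)⁆ + α • ⁅B (d m), f'.sum fun j b => b • B (h j)⁆ -
        β • ⁅B (d n), f.sum fun i a => a • B (h i)⁆ := by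
  have hcen' : ∀ x : g, ⁅B c, x⁆ = 0 := fun x => by rw [← lie_skew, hcen, neg_zero]
  rw [← lie_skew (B (d n))]
  simp only [add_lie, lie_add, smul_lie, lie_smul, hcen, hcen',
    lie_finsuppSum_h_finsuppSum_h B hhh, smul_zero, add_zero, smul_neg]
  module

end DHVIdx

open DHVIdx

theorem dhv_no_eigenvector_general
 {g : Type*} [LieRing g] [LieAlgebra ℂ g]
    (B : Module.Basis DHVIdx ℂ g)
    (hdd : ∀ m n : ℤ, ⁅B (DHVIdx.d m), B (DHVIdx.d n)⁆ =
      ((m - n : ℤ) : ℂ) • B (DHVIdx.d (m + n)) +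
      ((m - n : ℤ) : ℂ) • B (DHVIdx.h (m + n)) +
      (if m + n = 0 then ((m : ℂ) ^ 3 - (m : ℂ)) / 12 else 0) • B DHVIdx.c)
    (hdh : ∀ m n : ℤ, ⁅B (DHVIdx.d m), B (DHVIdx.h n)⁆ =
      ((-n : ℤ) : ℂ) • B (DHVIdx.h (m + n)))
    (hhh : ∀ m n : ℤ, ⁅B (DHVIdx.h m), B (DHVIdx.h n)⁆ = 0)
    (hcen : ∀ x : g, ⁅x, B DHVIdx.c⁆ = 0)
    (α β ζ : ℂ) (hα : α ≠ 0) (hβ : β ≠ 0)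
    (q : ℤ) (hq : q ≠ 0) (μ η : ℂ) (af bf : ℤ →₀ ℂ)
    (x y : g)
    (hx : x = α • B (DHVIdx.d 0) + (af.sum fun i a => a • B (DHVIdx.h i)) +
      μ • B DHVIdx.c)
    (hy : y = β • B (DHVIdx.d q) + (bf.sum fun j b => b • B (DHVIdx.h j)) +
      η • B DHVIdx.c) :
    ⁅x, y⁆ ≠ ζ • y := by
  intro hxy
  rw [hx, hy, lie_d_add_sum_h_add_c B hhh hcen, lie_d_zero_d B hdd, lie_d_finsuppSum_h B hdh,
    lie_d_finsuppSum_h B hdh] at hxy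
  have hd := congrArg (B.repr · (d q)) hxy
  have hh := congrArg (B.repr · (h q)) hxy
  classical
  simp only [map_add, map_sub, map_smul, Module.Basis.repr_self, Finsupp.add_apply,
    Finsupp.sub_apply, Finsupp.smul_apply, Finsupp.single_apply,
    repr_finsuppSum_h_apply_d,
    repr_finsuppSum_h_apply_h B bf (fun i a => -i * a) (by simp) (0 + ·) (n := q) (k := q) (by simp),
    repr_finsuppSum_h_apply_h B af (fun i a => -i * a) (by simp) (q + ·) (n := q) (k := 0) (by simp),
    repr_finsuppSum_h_apply_h B bf (fun _ a => a) (by simp) (fun j => j) (n := q) (k := q) (by simp),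
    reduceCtorEq, if_true, if_false, smul_eq_mul] at hd hh
  have hqαβ : (q : ℂ) * α * β ^ 2 = 0 := by linear_combination (-β) * hh + bf q * hd
  simp [hq, hα, hβ] at hqαβ

/-- There are no elements `x = α d₀ + Σ αᵢ hᵢ + μ c` and `y = β d_q + Σ βⱼ hⱼ + η c`
with `α, β, ζ ∈ ℂ*`, `q ∈ ℤ*`, satisfying `⁅x, y⁆ = ζ y`. -/
theorem dhv_no_eigenvector
 {g : Type*} [LieRing g] [LieAlgebra ℂ g]
    (B : Module.Basis DHVIdx ℂ g)
    (hdd : ∀ m n : ℤ, ⁅B (DHVIdx.d m), B (DHVIdx.d n)⁆ =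
      ((m - n : ℤ) : ℂ) • B (DHVIdx.d (m + n)) +
      ((m - n : ℤ) : ℂ) • B (DHVIdx.h (m + n)) +
      (if m + n = 0 then ((m : ℂ) ^ 3 - (m : ℂ)) / 12 else 0) • B DHVIdx.c)
    (hdh : ∀ m n : ℤ, ⁅B (DHVIdx.d m), B (DHVIdx.h n)⁆ =
      ((-n : ℤ) : ℂ) • B (DHVIdx.h (m + n)))
    (hhh : ∀ m n : ℤ, ⁅B (DHVIdx.h m), B (DHVIdx.h n)⁆ = 0)
    (hcen : ∀ x : g, ⁅x, B DHVIdx.c⁆ = 0)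
    (α β ζ : ℂ) (hα : α ≠ 0) (hβ : β ≠ 0) (hζ : ζ ≠ 0)
    (q : ℤ) (hq : q ≠ 0) (μ η : ℂ) (af bf : ℤ →₀ ℂ)
    (x y : g)
    (hx : x = α • B (DHVIdx.d 0) + (af.sum fun i a => a • B (DHVIdx.h i)) +
      μ • B DHVIdx.c)
    (hy : y = β • B (DHVIdx.d q) + (bf.sum fun j b => b • B (DHVIdx.h j)) +
      η • B DHVIdx.c) :
    ⁅x, y⁆ ≠ ζ • y :=
  dhv_no_eigenvector_general B hdd hdh hhh hcen α β ζ hα hβ q hq μ η af bf x y hx hy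
end

section
/- The Lie algebra L does not admit a triangular decomposition of Moody–Pianzola type: there is no decomposition L = L_− ⊕ H ⊕ L_+ with H abelian satisfying the axioms (TD1)–(TD3). -/
/-- The `α`-weight space of a subalgebra `H` acting on `g` by the adjoint
action: `{v | ⁅h, v⁆ = α h • v for all h ∈ H}`. -/
def wtSpace {g : Type*} [LieRing g] [LieAlgebra ℂ g] (H : LieSubalgebra ℂ g)
    (α : Module.Dual ℂ H) : Submodule ℂ g where
  carrier := {v | ∀ h : H, ⁅(h : g), v⁆ = α h • v}
  add_mem' := fun ha hb h => by rw [lie_add, ha h, hb h, smul_add]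
  zero_mem' := fun h => by simp
  smul_mem' := fun t v hv h => by rw [lie_smul, hv h, smul_comm]

/-!
In a triangular decomposition every element of `H` acts diagonalizably on `L`: `L₊` is a sum of
`H`-weight spaces, `L₋ = σ L₊` one for the opposite weights, and `H` is abelian. In `L`, however,
every `ad`-diagonalizable `x` is central. If `x` has a `d N`-component with `N ≠ 0`, take `N`
extremal in its direction (`s = ±1` below): comparing leading terms, no eigenvector of `ad x` has a
`d`-component beyond `N`, yet the eigenvectors span `L`. If `x = a • d 0 + y` with `y` in the span
of the `h n` and `c`, the deformation term of `⁅d 0, d 1⁆` makes `h 1` a Jordan partner of `d 1`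
for `ad x` unless `a = 0`. Once `x` lies in that abelian ideal, `(ad x)² = 0`, so `ad x = 0`.
Hence `H` is central, the weight spaces of nonzero weights vanish, and the weights in `Q` are
nonzero by (TD3): `L₊ = 0`.
-/

namespace Module.End

variable {K V : Type*} [Field K] [AddCommGroup V] [Module K V] {T : End K V}

theorem eq_zero_of_iSup_eigenspace_eq_top_of_mul_self_eq_zero
    (hT : ⨆ μ, eigenspace T μ = ⊤) (hT2 : T * T = 0) : T = 0 := by
  suffices ⊤ ≤ LinearMap.ker T from LinearMap.ker_eq_top.mp (top_le_iff.mp this)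
  rw [← hT]
  refine iSup_le fun μ v hv => ?_
  rw [mem_eigenspace_iff] at hv
  have : (μ * μ) • v = 0 := by
    rw [mul_smul, ← hv, ← map_smul, ← hv, ← Module.End.mul_apply, hT2, LinearMap.zero_apply]
  rw [LinearMap.mem_ker, hv, smul_eq_zero]
  simpa using this

theorem apply_sub_smul_mem_iSup_eigenspace_ne (hT : ⨆ μ, eigenspace T μ = ⊤) (μ : K) (w : V) :
    T w - μ • w ∈ ⨆ (ν) (_ : ν ≠ μ), eigenspace T ν := by
  have hw : w ∈ ⨆ ν, eigenspace T ν := hT ▸ Submodule.mem_top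
  refine Submodule.iSup_induction _ (motive := fun w => T w - μ • w ∈ _) hw
    (fun ν v hv => ?_) (by simp) (fun v v' hv hv' => ?_)
  · rw [mem_eigenspace_iff.mp hv, ← sub_smul]
    rcases eq_or_ne ν μ with rfl | hne
    · simp
    · exact Submodule.mem_iSup_of_mem ν (Submodule.mem_iSup_of_mem hne
        (Submodule.smul_mem _ _ hv))
  · simpa only [map_add, smul_add, add_sub_add_comm] using Submodule.add_mem _ hv hv'

/-- A diagonalizable endomorphism has no Jordan blocks. -/
theorem eq_zero_of_apply_sub_smul_eq_add (hT : ⨆ μ, eigenspace T μ = ⊤) {μ : K} {w u r : V}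
    (hu : u ∈ eigenspace T μ) (hr : r ∈ ⨆ (ν) (_ : ν ≠ μ), eigenspace T ν)
    (h : T w - μ • w = u + r) : u = 0 := by
  have hu' : u ∈ ⨆ (ν) (_ : ν ≠ μ), eigenspace T ν := by
    rw [← add_sub_cancel_right u r, ← h]
    exact Submodule.sub_mem _ (apply_sub_smul_mem_iSup_eigenspace_ne hT μ w) hr
  exact (Submodule.disjoint_def.mp (eigenspaces_iSupIndep T μ)) u hu hu'

end Module.End

theorem zero_notMem_addSubsemigroup_closure {R V : Type*} [Ring R] [CharZero R]
    [AddCommGroup V] [Module R V] {J : Set V} (hJ : LinearIndependent R ((↑) : J → V)) :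
    (0 : V) ∉ AddSubsemigroup.closure J := by
  have hclosure : ∀ v ∈ AddSubsemigroup.closure J, ∃ c : J →₀ R,
      Finsupp.linearCombination R (↑) c = v ∧
      ∃ n : ℕ, n ≠ 0 ∧ Finsupp.linearCombination R (fun _ => (1 : R)) c = n := by
    intro v hv
    refine AddSubsemigroup.closure_induction (fun v hv => ?_) (fun v v' _ _ hv hv' => ?_) hv
    · exact ⟨Finsupp.single ⟨v, hv⟩ 1, by simp, 1, one_ne_zero, by simp⟩
    · obtain ⟨c, rfl, n, hn, hc⟩ := hv
      obtain ⟨c', rfl, n', -, hc'⟩ := hv'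
      exact ⟨c + c', by simp, n + n', by omega, by simp [hc, hc']⟩
  intro h0
  obtain ⟨c, hc, n, hn, hsum⟩ := hclosure 0 h0
  rw [linearIndependent_iff.mp hJ c hc, map_zero] at hsum
  exact hn (by exact_mod_cast hsum.symm)

section Bracket

variable {K g : Type*} [CommRing K] [LieRing g] [LieAlgebra K g]

theorem Module.Basis.repr_lie {ι : Type*} (b : Module.Basis ι K g) (x y : g) (k : ι) :
    b.repr ⁅x, y⁆ k =
      (b.repr x).sum fun i a => (b.repr y).sum fun j c => a * c * b.repr ⁅b i, b j⁆ k := by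
  simpa [mul_assoc] using (LinearMap.sum_repr_mul_repr_mul b b
    (B := (LieAlgebra.ad K g : g →ₗ[K] g →ₗ[K] g).compr₂ (b.coord k)) x y).symm

theorem lie_mem_of_mem_span {s t : Set g} {p : Submodule K g}
    (hst : ∀ a ∈ s, ∀ b ∈ t, ⁅a, b⁆ ∈ p) {x y : g}
    (hx : x ∈ Submodule.span K s) (hy : y ∈ Submodule.span K t) : ⁅x, y⁆ ∈ p := by
  have := Submodule.apply_mem_map₂ (LieAlgebra.ad K g : g →ₗ[K] g →ₗ[K] g) hx hy
  rw [Submodule.map₂_span_span] at this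
  refine Submodule.span_le.mpr ?_ this
  rintro _ ⟨a, ha, b, hb, rfl⟩
  simpa using hst a ha b hb

end Bracket

section TriangularDecomposition

variable {g : Type*} [LieRing g] [LieAlgebra ℂ g] {H : LieSubalgebra ℂ g}

theorem wtSpace_le_eigenspace (α : Module.Dual ℂ H) (t : H) :
    wtSpace H α ≤ Module.End.eigenspace (LieAlgebra.ad ℂ g t) (α t) :=
  fun _ hv => Module.End.mem_eigenspace_iff.mpr (hv t)

theorem map_wtSpace_le_eigenspace {σ : g →ₗ[ℂ] g} (hσlie : ∀ x y : g, σ ⁅x, y⁆ = ⁅σ y, σ x⁆)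
    (hσH : ∀ x ∈ H, σ x = x) (α : Module.Dual ℂ H) (t : H) :
    (wtSpace H α).map σ ≤ Module.End.eigenspace (LieAlgebra.ad ℂ g t) (-α t) := by
  rintro _ ⟨u, hu, rfl⟩
  rw [Module.End.mem_eigenspace_iff, LieAlgebra.ad_apply, ← hσH t t.2, ← hσlie, ← lie_skew,
    hu t, map_neg, map_smul, neg_smul]

theorem wtSpace_eq_bot_of_lie_eq_zero (hH : ∀ t : H, ∀ v : g, ⁅(t : g), v⁆ = 0)
    {α : Module.Dual ℂ H} (hα : α ≠ 0) : wtSpace H α = ⊥ := by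
  obtain ⟨t, ht⟩ : ∃ t, α t ≠ 0 := by
    by_contra! h
    exact hα (LinearMap.ext h)
  refine (Submodule.eq_bot_iff _).mpr fun v hv => ?_
  have := hv t
  rw [hH, eq_comm, smul_eq_zero] at this
  exact this.resolve_left ht

theorem iSup_eigenspace_ad_eq_top_of_triangular {Lp Lm : LieSubalgebra ℂ g}
    {Q : Set (Module.Dual ℂ H)} {σ : g →ₗ[ℂ] g}
    (habel : ∀ x y : g, x ∈ H → y ∈ H → ⁅x, y⁆ = 0)
    (hsum : Lm.toSubmodule ⊔ H.toSubmodule ⊔ Lp.toSubmodule = ⊤)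
    (hLp : Lp.toSubmodule = ⨆ α ∈ Q, wtSpace H α)
    (hσlie : ∀ x y : g, σ ⁅x, y⁆ = ⁅σ y, σ x⁆) (hσmap : Lp.toSubmodule.map σ = Lm.toSubmodule)
    (hσH : ∀ x ∈ H, σ x = x) (t : H) :
    ⨆ μ, Module.End.eigenspace (LieAlgebra.ad ℂ g t) μ = ⊤ := by
  rw [eq_top_iff, ← hsum]
  refine sup_le (sup_le ?_ fun v hv => ?_) ?_
  · rw [← hσmap, hLp, Submodule.map_iSup]
    refine iSup_le fun α => ?_
    rw [Submodule.map_iSup]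
    exact iSup_le fun _ => (map_wtSpace_le_eigenspace hσlie hσH α t).trans (le_iSup _ _)
  · refine Submodule.mem_iSup_of_mem 0 (Module.End.mem_eigenspace_iff.mpr ?_)
    rw [LieAlgebra.ad_apply, habel _ _ t.2 hv, zero_smul]
  · rw [hLp]
    exact iSup₂_le fun α _ => (wtSpace_le_eigenspace α t).trans (le_iSup _ _)

end TriangularDecomposition

structure IsDHVBasis {g : Type*} [LieRing g] [LieAlgebra ℂ g] (B : Module.Basis DHVIdx ℂ g) :
    Prop where
  lie_d_d : ∀ m n : ℤ, ⁅B (DHVIdx.d m), B (DHVIdx.d n)⁆ =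
      ((m - n : ℤ) : ℂ) • B (DHVIdx.d (m + n)) +
      ((m - n : ℤ) : ℂ) • B (DHVIdx.h (m + n)) +
      (if m + n = 0 then ((m : ℂ) ^ 3 - (m : ℂ)) / 12 else 0) • B DHVIdx.c
  lie_d_h : ∀ m n : ℤ, ⁅B (DHVIdx.d m), B (DHVIdx.h n)⁆ = ((-n : ℤ) : ℂ) • B (DHVIdx.h (m + n))
  lie_h_h : ∀ m n : ℤ, ⁅B (DHVIdx.h m), B (DHVIdx.h n)⁆ = 0
  lie_c : ∀ x : g, ⁅x, B DHVIdx.c⁆ = 0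

def hcSpan {g : Type*} [LieRing g] [LieAlgebra ℂ g] (B : Module.Basis DHVIdx ℂ g) :
    Submodule ℂ g :=
  Submodule.span ℂ (B '' (Set.range DHVIdx.d)ᶜ)

theorem mem_hcSpan_iff {g : Type*} [LieRing g] [LieAlgebra ℂ g] {B : Module.Basis DHVIdx ℂ g}
    {x : g} : x ∈ hcSpan B ↔ ∀ m, B.repr x (.d m) = 0 := by
  rw [hcSpan, B.mem_span_image]
  constructor
  · intro h m
    by_contra hm
    exact h (Finsupp.mem_support_iff.mpr hm) ⟨m, rfl⟩
  · rintro h i hi ⟨m, rfl⟩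
    exact Finsupp.mem_support_iff.mp hi (h m)

theorem basis_h_mem_hcSpan {g : Type*} [LieRing g] [LieAlgebra ℂ g]
    {B : Module.Basis DHVIdx ℂ g} (n : ℤ) : B (.h n) ∈ hcSpan B :=
  Submodule.subset_span ⟨.h n, by rintro ⟨m, ⟨⟩⟩, rfl⟩

theorem DHVIdx.exists_extremal_d {M : Type*} [Zero M] (f : DHVIdx →₀ M) (s : ℤ) {j : ℤ}
    (hj : f (.d j) ≠ 0) : ∃ q, f (.d q) ≠ 0 ∧ ∀ n, f (.d n) ≠ 0 → s * n ≤ s * q := by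
  obtain ⟨q, hq, hmax⟩ := Finset.exists_max_image
    (f.support.preimage DHVIdx.d (Set.injOn_of_injective fun _ _ => DHVIdx.d.inj)) (s * ·)
    ⟨j, by simpa [Finset.mem_preimage] using hj⟩
  simp only [Finset.mem_preimage, Finsupp.mem_support_iff] at hq hmax
  exact ⟨q, hq, hmax⟩

namespace IsDHVBasis

open Module.End

variable {g : Type*} [LieRing g] [LieAlgebra ℂ g] {B : Module.Basis DHVIdx ℂ g}
  (hB : IsDHVBasis B)
include hB

theorem lie_c_left (y : g) : ⁅B .c, y⁆ = 0 := by
  rw [← lie_skew, hB.lie_c, neg_zero]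

theorem lie_h_d (n m : ℤ) : ⁅B (.h n), B (.d m)⁆ = (n : ℂ) • B (.h (m + n)) := by
  rw [← lie_skew, hB.lie_d_h]
  push_cast
  rw [neg_smul, neg_neg]

theorem repr_lie_d_d (m n k : ℤ) :
    B.repr ⁅B (.d m), B (.d n)⁆ (.d k) = if m + n = k then (m - n : ℂ) else 0 := by
  classical
  simp only [hB.lie_d_d, map_add, map_smul, Module.Basis.repr_self, Finsupp.add_apply,
    Finsupp.smul_apply, Finsupp.single_apply, DHVIdx.d.injEq, reduceCtorEq, if_false]
  split_ifs <;> simp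

theorem repr_lie_basis_d_eq_zero {i j : DHVIdx} {k : ℤ}
    (hij : ∀ m n, i = .d m → j = .d n → m + n ≠ k) : B.repr ⁅B i, B j⁆ (.d k) = 0 := by
  rcases i with m | m | _ <;> rcases j with n | n | _
  · rw [hB.repr_lie_d_d, if_neg (hij m n rfl rfl)]
  all_goals simp [hB.lie_d_h, hB.lie_h_h, hB.lie_c, hB.lie_h_d, hB.lie_c_left]

theorem lie_basis_mem_hcSpan {i j : DHVIdx} (hi : i ∉ Set.range DHVIdx.d) :
    ⁅B i, B j⁆ ∈ hcSpan B := by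
  rw [mem_hcSpan_iff]
  exact fun k => hB.repr_lie_basis_d_eq_zero fun m _ him _ _ => hi ⟨m, him.symm⟩

theorem lie_mem_hcSpan {x : g} (hx : x ∈ hcSpan B) (y : g) : ⁅x, y⁆ ∈ hcSpan B := by
  refine lie_mem_of_mem_span ?_ hx (B.span_eq ▸ Submodule.mem_top : y ∈ Submodule.span ℂ _)
  rintro _ ⟨i, hi, rfl⟩ _ ⟨j, rfl⟩
  exact hB.lie_basis_mem_hcSpan hi

theorem lie_eq_zero_of_mem_hcSpan {x y : g} (hx : x ∈ hcSpan B) (hy : y ∈ hcSpan B) :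
    ⁅x, y⁆ = 0 := by
  refine (Submodule.mem_bot ℂ).mp (lie_mem_of_mem_span ?_ hx hy)
  rintro _ ⟨i, hi, rfl⟩ _ ⟨j, hj, rfl⟩
  rcases i with m | m | _
  · exact absurd ⟨m, rfl⟩ hi
  · rcases j with n | n | _
    · exact absurd ⟨n, rfl⟩ hj
    · simp [hB.lie_h_h]
    · simp [hB.lie_c]
  · simp [hB.lie_c_left]

theorem repr_lie_d_add_of_extremal {x y : g} {s N q : ℤ} (hs : s = 1 ∨ s = -1)
    (hN : ∀ m, B.repr x (.d m) ≠ 0 → s * m ≤ s * N)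
    (hq : ∀ n, B.repr y (.d n) ≠ 0 → s * n ≤ s * q) :
    B.repr ⁅x, y⁆ (.d (N + q)) = B.repr x (.d N) * B.repr y (.d q) * (N - q) := by
  have hext : ∀ m n, B.repr x (.d m) ≠ 0 → B.repr y (.d n) ≠ 0 → m + n = N + q → m = N := by
    intro m n hm hn hmn
    have := hN m hm
    have := hq n hn
    rcases hs with rfl | rfl <;> omega
  rw [B.repr_lie, Finsupp.sum_eq_single (.d N), Finsupp.sum_eq_single (.d q), hB.repr_lie_d_d,
    if_pos rfl]
  · intro j _ hjq
    rw [hB.repr_lie_basis_d_eq_zero, mul_zero]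
    rintro m n ⟨⟩ rfl hmn
    exact hjq (by rw [add_left_cancel hmn])
  · simp
  · intro i hi hiN
    refine Finset.sum_eq_zero fun j hj => ?_
    dsimp only
    rw [hB.repr_lie_basis_d_eq_zero, mul_zero]
    rintro m n rfl rfl hmn
    exact hiN (by rw [hext m n hi (Finsupp.mem_support_iff.mp hj) hmn])
  · simp

theorem repr_d_eq_zero_of_lie_eq_smul {x v : g} {s N : ℤ} (hs : s = 1 ∨ s = -1)
    (hxN : B.repr x (.d N) ≠ 0) (hN : ∀ m, B.repr x (.d m) ≠ 0 → s * m ≤ s * N)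
    (hNpos : 0 < s * N) {μ : ℂ} (hv : ⁅x, v⁆ = μ • v) {j : ℤ} (hj : s * N < s * j) :
    B.repr v (.d j) = 0 := by
  by_contra hvj
  obtain ⟨q, hvq, hq⟩ := DHVIdx.exists_extremal_d (B.repr v) s hvj
  have hqj := hq j hvj
  have hvNq : B.repr v (.d (N + q)) = 0 := by
    by_contra h
    have := hq _ h
    rcases hs with rfl | rfl <;> omega
  have hNq : (N : ℂ) - q ≠ 0 := by
    rw [sub_ne_zero, Ne, Int.cast_inj]
    rcases hs with rfl | rfl <;> omega
  have := hB.repr_lie_d_add_of_extremal hs hN hq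
  rw [hv, map_smul, Finsupp.smul_apply, hvNq, smul_zero] at this
  exact mul_ne_zero (mul_ne_zero hxN hvq) hNq this.symm

theorem repr_d_eq_zero_of_iSup_eigenspace {x : g}
    (hx : ⨆ μ, eigenspace (LieAlgebra.ad ℂ g x) μ = ⊤) {m : ℤ} (hm : m ≠ 0) :
    B.repr x (.d m) = 0 := by
  by_contra hxm
  obtain ⟨s, hs, hsm⟩ : ∃ s : ℤ, (s = 1 ∨ s = -1) ∧ 0 < s * m := by
    rcases hm.lt_or_gt with h | h
    exacts [⟨-1, Or.inr rfl, by omega⟩, ⟨1, Or.inl rfl, by omega⟩]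
  obtain ⟨N, hxN, hN⟩ := DHVIdx.exists_extremal_d (B.repr x) s hxm
  have hbeyond : s * N < s * (N + s) := by rcases hs with rfl | rfl <;> omega
  have hker : ⊤ ≤ LinearMap.ker (B.coord (.d (N + s))) := by
    rw [← hx]
    exact iSup_le fun μ v hv => hB.repr_d_eq_zero_of_lie_eq_smul hs hxN hN
      (hsm.trans_le (hN m hxm)) (mem_eigenspace_iff.mp hv) hbeyond
  simpa using hker (Submodule.mem_top (x := B (.d (N + s))))

theorem repr_d_zero_eq_zero_of_iSup_eigenspace {x : g}
    (hx : ⨆ μ, eigenspace (LieAlgebra.ad ℂ g x) μ = ⊤) (hxd : ∀ m ≠ 0, B.repr x (.d m) = 0) :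
    B.repr x (.d 0) = 0 := by
  classical
  set a := B.repr x (.d 0)
  by_contra ha
  set y := x - a • B (.d 0)
  have hy : y ∈ hcSpan B := mem_hcSpan_iff.mpr fun m => by
    rcases eq_or_ne m 0 with rfl | hm
    · simp [y, a]
    · simp [y, hxd m hm, hm]
  have hxy : x = a • B (.d 0) + y := by simp [y]
  have hxh (j : ℤ) : B (.h j) ∈ eigenspace (LieAlgebra.ad ℂ g x) (-(a * j)) := by
    rw [mem_eigenspace_iff, LieAlgebra.ad_apply, hxy, add_lie, smul_lie, hB.lie_d_h,
      hB.lie_eq_zero_of_mem_hcSpan hy (basis_h_mem_hcSpan j), add_zero, zero_add, smul_smul]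
    push_cast
    ring_nf
  have hr : ⁅y, B (.d 1)⁆ ∈ ⨆ (ν) (_ : ν ≠ -a), eigenspace (LieAlgebra.ad ℂ g x) ν := by
    refine lie_mem_of_mem_span ?_ hy (Submodule.mem_span_singleton_self _)
    rintro _ ⟨i, hi, rfl⟩ _ rfl
    rcases i with m | k | _
    · exact absurd ⟨m, rfl⟩ hi
    · rw [hB.lie_h_d]
      rcases eq_or_ne k 0 with rfl | hk
      · simp
      · refine Submodule.smul_mem _ _ (Submodule.mem_iSup_of_mem _ (Submodule.mem_iSup_of_mem
          ?_ (hxh (1 + k))))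
        simpa [ha] using hk
    · rw [hB.lie_c_left]
      exact zero_mem _
  have hjordan : LieAlgebra.ad ℂ g x (B (.d 1)) - (-a) • B (.d 1) =
      (-a) • B (.h 1) + ⁅y, B (.d 1)⁆ := by
    rw [LieAlgebra.ad_apply, hxy, add_lie, smul_lie, hB.lie_d_d, if_neg (by norm_num), zero_add]
    module
  have := eq_zero_of_apply_sub_smul_eq_add hx
    (Submodule.smul_mem _ _ (by simpa using hxh 1)) hr hjordan
  simp [ha, B.ne_zero] at this

theorem lie_eq_zero_of_iSup_eigenspace {x : g}
    (hx : ⨆ μ, eigenspace (LieAlgebra.ad ℂ g x) μ = ⊤) (y : g) : ⁅x, y⁆ = 0 := by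
  have hxd {m : ℤ} (hm : m ≠ 0) := hB.repr_d_eq_zero_of_iSup_eigenspace hx hm
  have hxI : x ∈ hcSpan B := mem_hcSpan_iff.mpr fun m => by
    rcases eq_or_ne m 0 with rfl | hm
    exacts [hB.repr_d_zero_eq_zero_of_iSup_eigenspace hx fun _ => hxd, hxd hm]
  have hsq : LieAlgebra.ad ℂ g x * LieAlgebra.ad ℂ g x = 0 :=
    LinearMap.ext fun v => hB.lie_eq_zero_of_mem_hcSpan hxI (hB.lie_mem_hcSpan hxI v)
  exact LinearMap.congr_fun (eq_zero_of_iSup_eigenspace_eq_top_of_mul_self_eq_zero hx hsq) y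

end IsDHVBasis

/-- The deformed Heisenberg–Virasoro algebra `L` admits no Moody–Pianzola
triangular decomposition `L = L₋ ⊕ H ⊕ L₊` satisfying (TD1)–(TD3). -/
theorem dhv_no_triangular_decomposition
 {g : Type*} [LieRing g] [LieAlgebra ℂ g]
    (B : Module.Basis DHVIdx ℂ g)
    (hdd : ∀ m n : ℤ, ⁅B (DHVIdx.d m), B (DHVIdx.d n)⁆ =
      ((m - n : ℤ) : ℂ) • B (DHVIdx.d (m + n)) +
      ((m - n : ℤ) : ℂ) • B (DHVIdx.h (m + n)) +
      (if m + n = 0 then ((m : ℂ) ^ 3 - (m : ℂ)) / 12 else 0) • B DHVIdx.c)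
    (hdh : ∀ m n : ℤ, ⁅B (DHVIdx.d m), B (DHVIdx.h n)⁆ =
      ((-n : ℤ) : ℂ) • B (DHVIdx.h (m + n)))
    (hhh : ∀ m n : ℤ, ⁅B (DHVIdx.h m), B (DHVIdx.h n)⁆ = 0)
    (hcen : ∀ x : g, ⁅x, B DHVIdx.c⁆ = 0)
    :
    ¬ ∃ (Lp Lm H : LieSubalgebra ℂ g) (Q : AddSubsemigroup (Module.Dual ℂ H))
        (σ : g →ₗ[ℂ] g),
      Lp ≠ ⊥ ∧ Lm ≠ ⊥ ∧ H ≠ ⊥ ∧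
      (∀ x y : g, x ∈ H → y ∈ H → ⁅x, y⁆ = 0) ∧
      (Lm.toSubmodule ⊔ H.toSubmodule ⊔ Lp.toSubmodule = ⊤) ∧
      (∀ a ∈ Lm, ∀ b ∈ H, ∀ c' ∈ Lp, a + b + c' = (0 : g) →
        a = 0 ∧ b = 0 ∧ c' = 0) ∧
      (Lp.toSubmodule = ⨆ α ∈ (Q : Set (Module.Dual ℂ H)), wtSpace H α) ∧
      (∀ x y : g, σ ⁅x, y⁆ = ⁅σ y, σ x⁆) ∧ (∀ x : g, σ (σ x) = x) ∧
      (Lp.toSubmodule.map σ = Lm.toSubmodule) ∧ (∀ x ∈ H, σ x = x) ∧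
      (∃ J : Set (Module.Dual ℂ H),
        LinearIndependent ℂ ((↑) : J → Module.Dual ℂ H) ∧
        AddSubsemigroup.closure J = Q) := by
  rintro ⟨Lp, Lm, H, Q, σ, hLp, -, -, habel, hsum, -, hLpwt, hσlie, -, hσmap, hσH, J, hJ, rfl⟩
  have hB : IsDHVBasis B := ⟨hdd, hdh, hhh, hcen⟩
  have hcentral (t : H) (v : g) : ⁅(t : g), v⁆ = 0 := hB.lie_eq_zero_of_iSup_eigenspace
    (iSup_eigenspace_ad_eq_top_of_triangular habel hsum hLpwt hσlie hσmap hσH t) v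
  refine hLp ((LieSubalgebra.toSubmodule_eq_bot _).mp ?_)
  rw [hLpwt]
  refine iSup₂_eq_bot.mpr fun α hα => wtSpace_eq_bot_of_lie_eq_zero hcentral ?_
  rintro rfl
  exact zero_notMem_addSubsemigroup_closure hJ hα
end

section
/- Let g be a Lie algebra with basis {x_1, x_2, …} and V a g-module. Suppose there is a nonzero v ∈ V with Σ_{i=1}^∞ ℂ x_i v = Σ_{i=1}^m ℂ x_i v for some m. Then W = Σ_{n_1,…,n_m ∈ ℤ₊} ℂ x_1^{n_1} x_2^{n_2} ⋯ x_m^{n_m} v is a g-submodule of V. -/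
/-!
Filter by length: let `F N` be the span of the ordered monomials `x_{i₁} ⋯ x_{i_k} v` with
`i₁ ≤ ⋯ ≤ i_k < m` and `k ≤ N`. Then `x_j F N ⊆ F (N + 1)`, by induction on `N` and, inside,
on `j`. For `N = 0` this is the hypothesis on `v`. For a monomial `x_i u` with `u ∈ F (N - 1)`,
either `j ≤ i` and `x_j x_i u` is again ordered, or `j > i` and
`x_j x_i u = [x_j, x_i] u + x_i (x_j u)`, where the first term lies in `F N` by induction on `N`
and the second in `F (N + 1)` by induction on `j`, since `x_j u ∈ F N` and `i < j`.
The monomials spanning `W` are exactly the ordered ones, so `W` is the union of the `F N`.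
-/

/-- Iterated action of basis elements `x i` of a Lie algebra on a module
element, along a list of indices (leftmost index acts last). -/
def applySeq {g V : Type*} [LieRing g] [LieAlgebra ℂ g] [AddCommGroup V]
    [Module ℂ V] [LieRingModule g V] [LieModule ℂ g V] (x : ℕ → g) :
    List ℕ → V → V
  | [], v => v
  | i :: t, v => ⁅x i, applySeq x t v⁆

def IsOrderedWord (m : ℕ) (l : List ℕ) : Prop :=
  l.Pairwise (· ≤ ·) ∧ ∀ a ∈ l, a < m

def orderedWord (m : ℕ) (n : Fin m → ℕ) : List ℕ :=
  (List.ofFn fun i : Fin m => List.replicate (n i) (i : ℕ)).flatten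

namespace IsOrderedWord

variable {m : ℕ}

lemma tail {i : ℕ} {t : List ℕ} (h : IsOrderedWord m (i :: t)) : IsOrderedWord m t :=
  ⟨h.1.of_cons, fun a ha => h.2 a (List.mem_cons_of_mem _ ha)⟩

lemma cons {i j : ℕ} {t : List ℕ} (h : IsOrderedWord m (i :: t)) (hji : j ≤ i) :
    IsOrderedWord m (j :: i :: t) := by
  refine ⟨List.pairwise_cons.mpr ⟨fun b hb => ?_, h.1⟩, fun a ha => ?_⟩
  · rcases List.mem_cons.mp hb with rfl | hb
    · exact hji
    · exact hji.trans (List.rel_of_pairwise_cons h.1 hb)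
  · rcases List.mem_cons.mp ha with rfl | ha
    · exact hji.trans_lt (h.2 i List.mem_cons_self)
    · exact h.2 a ha

end IsOrderedWord

lemma isOrderedWord_orderedWord (m : ℕ) (n : Fin m → ℕ) : IsOrderedWord m (orderedWord m n) := by
  constructor
  · rw [orderedWord, List.pairwise_flatten, List.forall_mem_ofFn_iff, List.pairwise_ofFn]
    refine ⟨fun i => List.pairwise_replicate.mpr (Or.inr le_rfl), fun i j hij a ha b hb => ?_⟩
    rw [List.eq_of_mem_replicate ha, List.eq_of_mem_replicate hb]
    exact_mod_cast hij.le
  · intro a ha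
    obtain ⟨_, hl, hal⟩ := List.mem_flatten.mp ha
    obtain ⟨i, rfl⟩ := List.mem_ofFn.mp hl
    rw [List.eq_of_mem_replicate hal]
    exact i.isLt

lemma count_orderedWord (m : ℕ) (n : Fin m → ℕ) (a : ℕ) :
    (orderedWord m n).count a = if h : a < m then n ⟨a, h⟩ else 0 := by
  simp only [orderedWord, List.count_flatten, List.map_ofFn, List.sum_ofFn, Function.comp_apply,
    List.count_replicate, beq_iff_eq]
  split_ifs with h
  · rw [Finset.sum_eq_single ⟨a, h⟩] <;> simp +contextual [Fin.ext_iff]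
  · exact Finset.sum_eq_zero fun i _ => if_neg (by omega)

lemma IsOrderedWord.exists_orderedWord_eq {m : ℕ} {l : List ℕ} (hl : IsOrderedWord m l) :
    ∃ n, orderedWord m n = l := by
  refine ⟨fun i => l.count (i : ℕ), List.Perm.eq_of_pairwise' (isOrderedWord_orderedWord m _).1 hl.1 ?_⟩
  refine List.perm_iff_count.mpr fun a => ?_
  rw [count_orderedWord]
  split_ifs with h
  · rfl
  · exact (List.count_eq_zero.mpr fun ha => h (hl.2 a ha)).symm

lemma range_orderedWord (m : ℕ) : Set.range (orderedWord m) = {l | IsOrderedWord m l} :=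
  Set.ext fun _ => ⟨fun ⟨n, hn⟩ => hn ▸ isOrderedWord_orderedWord m n,
    IsOrderedWord.exists_orderedWord_eq⟩

section LieSpan

variable {R L M ι : Type*} [CommRing R] [LieRing L] [LieAlgebra R L] [AddCommGroup M]
  [Module R M] [LieRingModule L M] [LieModule R L M]

lemma lie_mem_of_mem_span_s14 {p : Submodule R M} {z : L} {s : Set M} {u : M}
    (hu : u ∈ Submodule.span R s) (h : ∀ w ∈ s, ⁅z, w⁆ ∈ p) : ⁅z, u⁆ ∈ p :=
  (Submodule.span_le (p := p.comap (LieModule.toEnd R L M z)) |>.mpr h) hu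

lemma lie_mem_of_forall_basis (b : Module.Basis ι R L) {p : Submodule R M} {u : M}
    (h : ∀ i, ⁅b i, u⁆ ∈ p) (z : L) : ⁅z, u⁆ ∈ p := by
  have hz : z ∈ Submodule.span R (Set.range b) := b.span_eq ▸ Submodule.mem_top
  induction hz using Submodule.span_induction with
  | mem w hw => obtain ⟨i, rfl⟩ := hw; exact h i
  | zero => simpa only [zero_lie] using p.zero_mem
  | add a c _ _ ha hc => simpa only [add_lie] using p.add_mem ha hc
  | smul r a _ ha => simpa only [smul_lie] using p.smul_mem r ha

end LieSpan

section OrderedMonomials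

variable {g V : Type*} [LieRing g] [LieAlgebra ℂ g] [AddCommGroup V] [Module ℂ V]
  [LieRingModule g V] [LieModule ℂ g V]

def orderedMonomialSpan (x : ℕ → g) (v : V) (m N : ℕ) : Submodule ℂ V :=
  Submodule.span ℂ ((fun l => applySeq x l v) '' {l | IsOrderedWord m l ∧ l.length ≤ N})

variable {x : ℕ → g} {v : V} {m : ℕ}

lemma orderedMonomialSpan_mono {N N' : ℕ} (h : N ≤ N') :
    orderedMonomialSpan x v m N ≤ orderedMonomialSpan x v m N' :=
  Submodule.span_mono (Set.image_mono fun _ hl => ⟨hl.1, hl.2.trans h⟩)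

lemma applySeq_mem_orderedMonomialSpan {N : ℕ} {l : List ℕ} (hl : IsOrderedWord m l)
    (hlen : l.length ≤ N) : applySeq x l v ∈ orderedMonomialSpan x v m N :=
  Submodule.subset_span ⟨l, ⟨hl, hlen⟩, rfl⟩

lemma orderedMonomialSpan_le_span {N : ℕ} :
    orderedMonomialSpan x v m N ≤
      Submodule.span ℂ ((fun l => applySeq x l v) '' {l | IsOrderedWord m l}) :=
  Submodule.span_mono (Set.image_mono fun _ hl => hl.1)

variable (xb : Module.Basis ℕ ℂ g)
  (hspan : Submodule.span ℂ (Set.range fun i : ℕ => ⁅xb i, v⁆) =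
    Submodule.span ℂ ((fun i : ℕ => ⁅xb i, v⁆) '' Set.Iio m))
include hspan

lemma basis_lie_mem_orderedMonomialSpan_one (j : ℕ) :
    ⁅xb j, v⁆ ∈ orderedMonomialSpan (fun i => xb i) v m 1 := by
  have hj : ⁅xb j, v⁆ ∈ Submodule.span ℂ ((fun i : ℕ => ⁅xb i, v⁆) '' Set.Iio m) :=
    hspan ▸ Submodule.subset_span ⟨j, rfl⟩
  refine Submodule.span_le.mpr ?_ hj
  rintro _ ⟨i, hi, rfl⟩
  exact applySeq_mem_orderedMonomialSpan (l := [i])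
    ⟨List.pairwise_singleton _ i, by simpa using hi⟩ le_rfl

lemma basis_lie_mem_orderedMonomialSpan_succ (N j : ℕ) {u : V}
    (hu : u ∈ orderedMonomialSpan (fun i => xb i) v m N) :
    ⁅xb j, u⁆ ∈ orderedMonomialSpan (fun i => xb i) v m (N + 1) := by
  induction N generalizing j u with
  | zero =>
    refine lie_mem_of_mem_span_s14 hu ?_
    rintro _ ⟨l, ⟨-, hl⟩, rfl⟩
    rw [List.length_eq_zero_iff.mp (Nat.le_zero.mp hl)]
    exact basis_lie_mem_orderedMonomialSpan_one xb hspan j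
  | succ N ih =>
    induction j using Nat.strong_induction_on generalizing u with
    | _ j ihj =>
    refine lie_mem_of_mem_span_s14 hu ?_
    rintro _ ⟨l, ⟨hl, hlen⟩, rfl⟩
    cases l with
    | nil =>
      exact orderedMonomialSpan_mono (by omega)
        (ih j (applySeq_mem_orderedMonomialSpan hl (Nat.zero_le N)))
    | cons i t =>
      by_cases hji : j ≤ i
      · exact applySeq_mem_orderedMonomialSpan (hl.cons hji) (by simpa using hlen)
      · have ht : applySeq (fun i => xb i) t v ∈ orderedMonomialSpan (fun i => xb i) v m N :=
          applySeq_mem_orderedMonomialSpan hl.tail (by simpa using hlen)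
        show ⁅xb j, ⁅xb i, applySeq (fun i => xb i) t v⁆⁆ ∈ _
        rw [leibniz_lie]
        refine add_mem ?_ (ihj i (by omega) (ih j ht))
        exact orderedMonomialSpan_mono (by omega)
          (lie_mem_of_forall_basis xb (fun k => ih k ht) _)

end OrderedMonomials

theorem span_of_monomials_is_submodule_general {g V : Type*} [LieRing g]
    [LieAlgebra ℂ g] [AddCommGroup V] [Module ℂ V] [LieRingModule g V]
    [LieModule ℂ g V]
    (xb : Module.Basis ℕ ℂ g) (v : V) (m : ℕ)
    (hspan : Submodule.span ℂ (Set.range fun i : ℕ => ⁅xb i, v⁆) =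
      Submodule.span ℂ ((fun i : ℕ => ⁅xb i, v⁆) '' Set.Iio m))
    (Wsub : Submodule ℂ V)
    (hW : Wsub = Submodule.span ℂ (Set.range fun n : Fin m → ℕ =>
      applySeq (fun i => xb i)
        ((List.ofFn fun i : Fin m => List.replicate (n i) (i : ℕ)).flatten) v)) :
    ∀ z : g, ∀ y ∈ Wsub, ⁅z, y⁆ ∈ Wsub := by
  have hW' : Wsub = Submodule.span ℂ
      ((fun l => applySeq (fun i => xb i) l v) '' {l | IsOrderedWord m l}) := by
    rw [hW, ← range_orderedWord, ← Set.range_comp]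
    rfl
  intro z y hy
  rw [hW'] at hy ⊢
  refine lie_mem_of_forall_basis xb (fun k => lie_mem_of_mem_span_s14 hy ?_) z
  rintro _ ⟨l, hl, rfl⟩
  exact orderedMonomialSpan_le_span <| basis_lie_mem_orderedMonomialSpan_succ xb hspan l.length k
    (applySeq_mem_orderedMonomialSpan hl le_rfl)

/-- If `g` has basis `x₀, x₁, …`, `V` is a `g`-module and `v ≠ 0` satisfies
`Σᵢ ℂ xᵢ v = Σ_{i<m} ℂ xᵢ v`, then the span of the monomials
`x₀^{n₀} x₁^{n₁} ⋯ x_{m-1}^{n_{m-1}} v` is a `g`-submodule of `V`. -/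
theorem span_of_monomials_is_submodule {g V : Type*} [LieRing g]
    [LieAlgebra ℂ g] [AddCommGroup V] [Module ℂ V] [LieRingModule g V]
    [LieModule ℂ g V]
    (xb : Module.Basis ℕ ℂ g) (v : V) (hv : v ≠ 0) (m : ℕ)
    (hspan : Submodule.span ℂ (Set.range fun i : ℕ => ⁅xb i, v⁆) =
      Submodule.span ℂ ((fun i : ℕ => ⁅xb i, v⁆) '' Set.Iio m))
    (Wsub : Submodule ℂ V)
    (hW : Wsub = Submodule.span ℂ (Set.range fun n : Fin m → ℕ =>
      applySeq (fun i => xb i)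
        ((List.ofFn fun i : Fin m => List.replicate (n i) (i : ℕ)).flatten) v)) :
    ∀ z : g, ∀ y ∈ Wsub, ⁅z, y⁆ ∈ Wsub :=
  span_of_monomials_is_submodule_general xb v m hspan Wsub hW
end

section
/- Let ℂv_{λμ} be the one-dimensional L_0-module on which c acts by λ, h_0 by μ, and all d_i (i ≥ 1), h_i (i ≥ 1), and d_0 act by zero (consistently with the one-dimensionality). If μ = 0, then the element h_{−1} ⊗ v_{λμ} of the generalized Verma module Ind_0(ℂv_{λμ}) generates a nonzero proper submodule; in particular, for all m ∈ ℤ₊, d_m(h_{−1} ⊗ v_{λμ}) and h_m(h_{−1} ⊗ v_{λμ}) lie in ℂ(h_{−1} ⊗ v_{λμ}). -/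
universe u

/-!
`Ind₀(ℂ v)` is realised without a PBW theorem. On the free module over words in the basis
`d_m, h_m` (`m < 0`) of a complement `L₋` of `L₀`, a basis vector of `L₋` acts by prepending
itself, and a basis vector `x` of `L₀` acts by `x (a t) = [x, a] t + a (x t)`, ending with the
character on the empty word. Modulo the relations `a b - b a - [a, b]` this becomes a Lie module:
the failure `[ρ x, ρ y] - ρ [x, y]` satisfies a cocycle identity which, by induction on words,
keeps it inside the relations. The empty word `v` is then a highest weight vector.

The relations have no component on the empty word, nor on the one-letter word `h₋₁`, since
brackets of two elements of `L₋` have degree at most `-2`; so `v ≠ 0` and `h₋₁ v ≠ 0`. For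
`μ = 0` the character vanishes on the ideal `I` spanned by the `h_n`, and by induction on words so
does the empty-word coefficient of `I v`; hence `⁅I, V⁆` contains `h₋₁ v` but not `v`. The
universal property carries these facts over to `h₋₁ w` and `w`.
-/

noncomputable section

open Submodule

attribute [local instance] LieRing.ofAssociativeRing

section LieDefect

variable {R L A : Type*} [CommRing R] [LieRing L] [LieAlgebra R L] [Ring A] [Algebra R A]

def lieDefect (Φ : L →ₗ[R] A) : L →ₗ[R] L →ₗ[R] A :=
  (LinearMap.mul R A).compl₁₂ Φ Φ - ((LinearMap.mul R A).compl₁₂ Φ Φ).flip -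
    (LieModule.toEnd R L L : L →ₗ[R] Module.End R L).compr₂ Φ

@[simp]
lemma lieDefect_apply (Φ : L →ₗ[R] A) (x y : L) :
    lieDefect Φ x y = Φ x * Φ y - Φ y * Φ x - Φ ⁅x, y⁆ := by
  simp [lieDefect]

lemma lieDefect_swap (Φ : L →ₗ[R] A) (x y : L) : lieDefect Φ y x = -lieDefect Φ x y := by
  simp only [lieDefect_apply, ← lie_skew x y, map_neg]
  abel

lemma mul_lieDefect_sub (Φ : L →ₗ[R] A) (y a b : L) :
    Φ y * lieDefect Φ a b - lieDefect Φ a b * Φ y =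
      (Φ a * lieDefect Φ y b - lieDefect Φ y b * Φ a) -
        (Φ b * lieDefect Φ y a - lieDefect Φ y a * Φ b) +
        lieDefect Φ ⁅y, a⁆ b - lieDefect Φ ⁅y, b⁆ a - lieDefect Φ y ⁅a, b⁆ := by
  have jacobi : Φ ⁅y, ⁅a, b⁆⁆ = Φ ⁅⁅y, a⁆, b⁆ - Φ ⁅⁅y, b⁆, a⁆ := by
    rw [leibniz_lie, ← lie_skew ⁅y, b⁆ a, map_add, map_neg, sub_eq_add_neg, neg_neg]
  simp only [lieDefect_apply, jacobi]
  noncomm_ring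

end LieDefect

lemma LinearMap.apply_mem_of_mem_span₂ {R M N P : Type*} [CommSemiring R] [AddCommMonoid M]
    [AddCommMonoid N] [AddCommMonoid P] [Module R M] [Module R N] [Module R P]
    (f : M →ₗ[R] N →ₗ[R] P) {s : Set M} {t : Set N} {Q : Submodule R P}
    (h : ∀ x ∈ s, ∀ y ∈ t, f x y ∈ Q) {x : M} {y : N} (hx : x ∈ span R s) (hy : y ∈ span R t) :
    f x y ∈ Q := by
  refine map₂_le.mp ?_ x hx y hy
  rw [map₂_span_span, span_le]
  rintro _ ⟨x, hx, y, hy, rfl⟩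
  exact h x hx y hy

namespace InducedModule

variable {R : Type*} [CommRing R] {G : Type*}

def consₗ (a : G) : (List G →₀ R) →ₗ[R] List G →₀ R := Finsupp.lmapDomain R R (List.cons a)

def prependₗ (l : List G) : (List G →₀ R) →ₗ[R] List G →₀ R := Finsupp.lmapDomain R R (l ++ ·)

lemma consₗ_single (a : G) (l : List G) (r : R) :
    consₗ a (Finsupp.single l r) = Finsupp.single (a :: l) r := by
  simp [consₗ]

lemma consₗ_comp_prependₗ (a : G) (l : List G) :
    consₗ a ∘ₗ prependₗ l = (prependₗ (a :: l) : (List G →₀ R) →ₗ[R] List G →₀ R) := by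
  ext
  simp [consₗ, prependₗ]

lemma prependₗ_nil : (prependₗ [] : (List G →₀ R) →ₗ[R] List G →₀ R) = LinearMap.id := by
  ext
  simp [prependₗ]

lemma consₗ_apply_cons (a : G) (z : List G →₀ R) (l : List G) : consₗ a z (a :: l) = z l :=
  Finsupp.mapDomain_apply List.cons_injective z l

lemma consₗ_apply_of_ne {a : G} (z : List G →₀ R) {w : List G} (hw : ∀ l, a :: l ≠ w) :
    consₗ a z w = 0 :=
  Finsupp.mapDomain_of_notMem_range z w (by simpa using hw)

lemma consₗ_apply_singleton {a g₀ : G} {w : List G →₀ R} (hw : w [] = 0) :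
    consₗ a w [g₀] = 0 := by
  by_cases h : a = g₀
  · rw [h, consₗ_apply_cons, hw]
  · exact consₗ_apply_of_ne w fun l hl => h (List.cons_eq_cons.mp hl).1

-- `B` splits `L` into `negSpan B`, playing the role of `L₋`, and `posSpan B`, playing the role of
-- `L₀`; `χ` prescribes how the basis of `posSpan B` acts on the vacuum.
variable {L P : Type*} [LieRing L] [LieAlgebra R L] (B : Module.Basis (G ⊕ P) R L) (χ : P → R)

def basisAct : List G → G ⊕ P → List G →₀ R
  | l, .inl a => Finsupp.single (a :: l) 1
  | [], .inr p => Finsupp.single [] (χ p)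
  | a :: l, .inr p =>
    B.constr R (basisAct l) ⁅B (.inr p), B (.inl a)⁆ + consₗ a (basisAct l (.inr p))

def wordAct : L →ₗ[R] Module.End R (List G →₀ R) :=
  B.constr R fun i => Finsupp.linearCombination R fun l => basisAct B χ l i

def weight : L →ₗ[R] R := B.constr R (Sum.elim 0 χ)

def negSpan : Submodule R L := span R (Set.range (B ∘ Sum.inl))

def posSpan : Submodule R L := span R (Set.range (B ∘ Sum.inr))

lemma inl_mem_negSpan (a : G) : B (.inl a) ∈ negSpan B := subset_span ⟨a, rfl⟩

lemma wordAct_basis_single (i : G ⊕ P) (l : List G) :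
    wordAct B χ (B i) (Finsupp.single l 1) = basisAct B χ l i := by
  simp [wordAct]

lemma wordAct_single (y : L) (l : List G) :
    wordAct B χ y (Finsupp.single l 1) = B.constr R (basisAct B χ l) y := by
  have : LinearMap.applyₗ (Finsupp.single l 1) ∘ₗ wordAct B χ = B.constr R (basisAct B χ l) :=
    B.ext fun i => by simp [wordAct_basis_single]
  exact LinearMap.congr_fun this y

lemma wordAct_inl (a : G) : wordAct B χ (B (.inl a)) = consₗ a :=
  Finsupp.lhom_ext fun l r => by
    rw [← mul_one r, ← smul_eq_mul, ← Finsupp.smul_single, map_smul, map_smul,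
      wordAct_basis_single, consₗ_single, basisAct]

lemma wordAct_inr_nil (p : P) :
    wordAct B χ (B (.inr p)) (Finsupp.single [] 1) = Finsupp.single [] (χ p) := by
  rw [wordAct_basis_single, basisAct]

lemma wordAct_inr_cons (p : P) (a : G) (l : List G) :
    wordAct B χ (B (.inr p)) (Finsupp.single (a :: l) 1) =
      wordAct B χ ⁅B (.inr p), B (.inl a)⁆ (Finsupp.single l 1)
        + consₗ a (wordAct B χ (B (.inr p)) (Finsupp.single l 1)) := by
  rw [wordAct_basis_single, basisAct, wordAct_single, wordAct_basis_single]

lemma wordAct_nil_of_mem_posSpan {y : L} (hy : y ∈ posSpan B) :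
    wordAct B χ y (Finsupp.single [] 1) = Finsupp.single [] (weight B χ y) := by
  induction hy using span_induction with
  | mem y hy =>
    obtain ⟨p, rfl⟩ := hy
    simp [wordAct_inr_nil, weight]
  | zero => simp
  | add x y _ _ hx hy => simp [hx, hy]
  | smul r x _ hx => simp [hx]

lemma wordAct_apply_nil_of_mem_negSpan {n : L} (hn : n ∈ negSpan B) (z : List G →₀ R) :
    wordAct B χ n z [] = 0 := by
  induction hn using span_induction with
  | mem n hn =>
    obtain ⟨a, rfl⟩ := hn
    rw [Function.comp_apply, wordAct_inl]
    exact consₗ_apply_of_ne z fun l => List.cons_ne_nil a l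
  | zero => simp
  | add x y _ _ hx hy => simp [hx, hy]
  | smul r x _ hx => simp [hx]

lemma wordAct_apply_singleton_of_mem_span {g₀ : G} {n : L}
    (hn : n ∈ span R (B ∘ .inl '' {g₀}ᶜ)) (z : List G →₀ R) : wordAct B χ n z [g₀] = 0 := by
  induction hn using span_induction with
  | mem n hn =>
    obtain ⟨a, ha, rfl⟩ := hn
    rw [Function.comp_apply, wordAct_inl]
    exact consₗ_apply_of_ne z fun l hl => ha (List.cons_eq_cons.mp hl).1
  | zero => simp
  | add x y _ _ hx hy => simp [hx, hy]
  | smul r x _ hx => simp [hx]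

abbrev wordDefect : L →ₗ[R] L →ₗ[R] Module.End R (List G →₀ R) :=
  lieDefect (A := Module.End R (List G →₀ R)) (wordAct B χ)

-- Words in `G` model the tensor algebra of `negSpan B`, and `rel` is its two-sided ideal
-- generated by the elements `a ⊗ b - b ⊗ a - [a, b]`.
def rel : Submodule R (List G →₀ R) :=
  span R {x | ∃ l a b z, x = prependₗ l (wordDefect B χ (B (.inl a)) (B (.inl b)) z)}

lemma wordDefect_inl_inl_mem_rel (a b : G) (z : List G →₀ R) :
    wordDefect B χ (B (.inl a)) (B (.inl b)) z ∈ rel B χ :=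
  subset_span ⟨[], a, b, z, by rw [prependₗ_nil, LinearMap.id_apply]⟩

lemma consₗ_mem_rel (a : G) {z : List G →₀ R} (hz : z ∈ rel B χ) : consₗ a z ∈ rel B χ := by
  induction hz using span_induction with
  | mem x hx =>
    obtain ⟨l, b, b', z, rfl⟩ := hx
    rw [← LinearMap.comp_apply, consₗ_comp_prependₗ]
    exact subset_span ⟨a :: l, b, b', z, rfl⟩
  | zero => simp
  | add x y _ _ hx hy => simpa using add_mem hx hy
  | smul r x _ hx => simpa using smul_mem _ r hx

lemma wordDefect_inr_inl (p : P) (a : G) :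
    wordDefect B χ (B (.inr p)) (B (.inl a)) = 0 :=
  Finsupp.lhom_ext fun l r => by
    rw [← mul_one r, ← smul_eq_mul, ← Finsupp.smul_single, map_smul, map_smul]
    simp [wordAct_inl, consₗ_single, wordAct_inr_cons]

lemma wordDefect_mem_rel_of_mem_negSpan (y : L) {n : L} (hn : n ∈ negSpan B)
    (z : List G →₀ R) : wordDefect B χ y n z ∈ rel B χ := by
  refine ((wordDefect B χ).compr₂ (LinearMap.applyₗ z)).apply_mem_of_mem_span₂
    (s := Set.range B) ?_ (B.mem_span y) hn
  rintro _ ⟨i, rfl⟩ _ ⟨a, rfl⟩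
  rcases i with b | p
  · exact wordDefect_inl_inl_mem_rel B χ b a z
  · simp only [LinearMap.compr₂_apply, LinearMap.applyₗ_apply_apply, Function.comp_apply,
      wordDefect_inr_inl, LinearMap.zero_apply, zero_mem]

lemma wordDefect_inl_mem_rel (a : G) (y : L) (z : List G →₀ R) :
    wordDefect B χ (B (.inl a)) y z ∈ rel B χ := by
  rw [lieDefect_swap, LinearMap.neg_apply]
  exact neg_mem (wordDefect_mem_rel_of_mem_negSpan B χ y (inl_mem_negSpan B a) z)

variable (hneg : ∀ a b : G, ⁅B (.inl a), B (.inl b)⁆ ∈ negSpan B)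
  (hpos : ∀ p q : P, ⁅B (.inr p), B (.inr q)⁆ ∈ posSpan B)
  (hχ : ∀ p q : P, weight B χ ⁅B (.inr p), B (.inr q)⁆ = 0)

include hneg in
lemma apply_nil_eq_zero_of_mem_rel {z : List G →₀ R} (hz : z ∈ rel B χ) : z [] = 0 := by
  induction hz using span_induction with
  | mem x hx =>
    obtain ⟨l, a, b, z, rfl⟩ := hx
    cases l with
    | nil =>
      simp only [prependₗ_nil, LinearMap.id_apply, lieDefect_apply, LinearMap.sub_apply,
        Module.End.mul_apply, Finsupp.sub_apply, wordAct_inl,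
        wordAct_apply_nil_of_mem_negSpan B χ (hneg a b)]
      rw [consₗ_apply_of_ne _ fun l => List.cons_ne_nil a l,
        consₗ_apply_of_ne _ fun l => List.cons_ne_nil b l, sub_zero, sub_zero]
    | cons g l =>
      rw [← consₗ_comp_prependₗ, LinearMap.comp_apply]
      exact consₗ_apply_of_ne _ fun l => List.cons_ne_nil g l
  | zero => simp
  | add x y _ _ hx hy => simp [hx, hy]
  | smul r x _ hx => simp [hx]

include hneg in
lemma apply_singleton_eq_zero_of_mem_rel {g₀ : G}
    (hg₀ : ∀ a b : G, ⁅B (.inl a), B (.inl b)⁆ ∈ span R (B ∘ .inl '' {g₀}ᶜ))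
    {z : List G →₀ R} (hz : z ∈ rel B χ) : z [g₀] = 0 := by
  induction hz using span_induction with
  | mem x hx =>
    obtain ⟨l, a, b, z, rfl⟩ := hx
    cases l with
    | nil =>
      simp only [prependₗ_nil, LinearMap.id_apply, lieDefect_apply, LinearMap.sub_apply,
        Module.End.mul_apply, Finsupp.sub_apply, wordAct_inl,
        wordAct_apply_singleton_of_mem_span B χ (hg₀ a b)]
      rw [consₗ_apply_singleton (consₗ_apply_of_ne _ fun l => List.cons_ne_nil b l),
        consₗ_apply_singleton (consₗ_apply_of_ne _ fun l => List.cons_ne_nil a l), sub_zero,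
        sub_zero]
    | cons g l =>
      rw [← consₗ_comp_prependₗ, LinearMap.comp_apply]
      exact consₗ_apply_singleton (apply_nil_eq_zero_of_mem_rel B χ hneg
        (subset_span ⟨l, a, b, z, rfl⟩))
  | zero => simp
  | add x y _ _ hx hy => simp [hx, hy]
  | smul r x _ hx => simp [hx]

include hneg in
lemma wordAct_wordDefect_mem_rel (y : L) (a b : G) (z : List G →₀ R) :
    wordAct B χ y (wordDefect B χ (B (.inl a)) (B (.inl b)) z) ∈ rel B χ := by
  have key := congrArg (· z) (mul_lieDefect_sub (A := Module.End R (List G →₀ R)) (wordAct B χ)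
    y (B (.inl a)) (B (.inl b)))
  simp only [LinearMap.sub_apply, LinearMap.add_apply, Module.End.mul_apply, wordAct_inl] at key
  rw [sub_eq_iff_eq_add] at key
  rw [key]
  have hD := wordDefect_mem_rel_of_mem_negSpan B χ
  refine add_mem (sub_mem (sub_mem (add_mem (sub_mem (sub_mem ?_ ?_) (sub_mem ?_ ?_)) ?_) ?_) ?_)
    (wordDefect_inl_inl_mem_rel B χ a b _)
  · exact consₗ_mem_rel B χ a (hD _ (inl_mem_negSpan B b) _)
  · exact hD _ (inl_mem_negSpan B b) _
  · exact consₗ_mem_rel B χ b (hD _ (inl_mem_negSpan B a) _)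
  · exact hD _ (inl_mem_negSpan B a) _
  · exact hD _ (inl_mem_negSpan B b) _
  · exact hD _ (inl_mem_negSpan B a) _
  · exact hD _ (hneg a b) _

include hneg in
lemma wordAct_mem_rel (y : L) {z : List G →₀ R} (hz : z ∈ rel B χ) :
    wordAct B χ y z ∈ rel B χ := by
  induction hz using span_induction generalizing y with
  | mem x hx =>
    obtain ⟨l, a, b, z, rfl⟩ := hx
    induction l generalizing y with
    | nil =>
      rw [prependₗ_nil, LinearMap.id_apply]
      exact wordAct_wordDefect_mem_rel B χ hneg y a b z
    | cons g l ih =>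
      rw [← consₗ_comp_prependₗ, LinearMap.comp_apply, ← wordAct_inl B χ]
      set w := prependₗ l (wordDefect B χ (B (.inl a)) (B (.inl b)) z)
      have hcomm : wordAct B χ y (wordAct B χ (B (.inl g)) w) = wordDefect B χ y (B (.inl g)) w
          + wordAct B χ (B (.inl g)) (wordAct B χ y w) + wordAct B χ ⁅y, B (.inl g)⁆ w := by
        simp only [lieDefect_apply, LinearMap.sub_apply, Module.End.mul_apply]
        abel
      rw [hcomm, wordAct_inl]
      exact add_mem (add_mem (wordDefect_mem_rel_of_mem_negSpan B χ y (inl_mem_negSpan B g) w)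
        (consₗ_mem_rel B χ g (ih y))) (ih _)
  | zero => simp
  | add x x' _ _ hx hx' => simpa using add_mem (hx y) (hx' y)
  | smul r x _ hx => simpa using smul_mem _ r (hx y)

include hpos hχ in
lemma wordDefect_inr_inr_nil (p q : P) :
    wordDefect B χ (B (.inr p)) (B (.inr q)) (Finsupp.single [] 1) = 0 := by
  have hsingle (r : R) : Finsupp.single ([] : List G) r = r • Finsupp.single [] 1 := by simp
  simp only [lieDefect_apply, LinearMap.sub_apply, Module.End.mul_apply, wordAct_inr_nil,
    wordAct_nil_of_mem_posSpan B χ (hpos p q), hχ]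
  rw [hsingle (χ q), hsingle (χ p), map_smul, map_smul, wordAct_inr_nil, wordAct_inr_nil]
  simp [Finsupp.smul_single, mul_comm]

include hpos hχ in
lemma wordDefect_nil_mem_rel (x y : L) :
    wordDefect B χ x y (Finsupp.single [] 1) ∈ rel B χ := by
  refine ((wordDefect B χ).compr₂ (LinearMap.applyₗ (Finsupp.single [] 1))).apply_mem_of_mem_span₂
    (s := Set.range B) (t := Set.range B) ?_ (B.mem_span x) (B.mem_span y)
  rintro _ ⟨i, rfl⟩ _ ⟨j, rfl⟩
  simp only [LinearMap.compr₂_apply, LinearMap.applyₗ_apply_apply]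
  rcases j with a | q
  · exact wordDefect_mem_rel_of_mem_negSpan B χ _ (inl_mem_negSpan B a) _
  rcases i with b | p
  · exact wordDefect_inl_mem_rel B χ b _ _
  · rw [wordDefect_inr_inr_nil B χ hpos hχ]
    exact zero_mem _

include hneg hpos hχ in
lemma wordDefect_mem_rel (x y : L) (z : List G →₀ R) : wordDefect B χ x y z ∈ rel B χ := by
  induction z using Finsupp.induction_linear generalizing x y with
  | zero => simp
  | add z z' hz hz' =>
    rw [map_add]
    exact add_mem (hz x y) (hz' x y)
  | single l r =>
    rw [← mul_one r, ← smul_eq_mul, ← Finsupp.smul_single, map_smul]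
    refine smul_mem _ r ?_
    induction l generalizing x y with
    | nil => exact wordDefect_nil_mem_rel B χ hpos hχ x y
    | cons g l ih =>
      set u : List G →₀ R := Finsupp.single l 1
      rw [← consₗ_single, ← wordAct_inl B χ g]
      set Φ := wordAct B χ
      set D := wordDefect B χ
      have key := congrArg (· u)
        (mul_lieDefect_sub (A := Module.End R (List G →₀ R)) Φ (B (.inl g)) x y)
      simp only [LinearMap.sub_apply, LinearMap.add_apply, Module.End.mul_apply] at key
      have expand : D x y (Φ (B (.inl g)) u) = Φ (B (.inl g)) (D x y u)
          - ((Φ x (D (B (.inl g)) y u) - D (B (.inl g)) y (Φ x u))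
            - (Φ y (D (B (.inl g)) x u) - D (B (.inl g)) x (Φ y u))
            + D ⁅B (.inl g), x⁆ y u - D ⁅B (.inl g), y⁆ x u - D (B (.inl g)) ⁅x, y⁆ u) := by
        rw [← key]
        abel
      have hD := wordDefect_inl_mem_rel B χ g
      rw [expand]
      refine sub_mem ?_ (sub_mem (sub_mem (add_mem (sub_mem (sub_mem ?_ (hD y _))
        (sub_mem ?_ (hD x _))) (ih _ _)) (ih _ _)) (hD _ u))
      · rw [wordAct_inl]
        exact consₗ_mem_rel B χ g (ih x y)
      · exact wordAct_mem_rel B χ hneg x (hD y u)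
      · exact wordAct_mem_rel B χ hneg y (hD x u)

abbrev Induced := (List G →₀ R) ⧸ rel B χ

include hneg hpos hχ in
lemma mk_wordAct_lie (x y : L) (z : List G →₀ R) :
    (Submodule.Quotient.mk (wordAct B χ ⁅x, y⁆ z) : Induced B χ) =
      Submodule.Quotient.mk (wordAct B χ x (wordAct B χ y z)) -
        Submodule.Quotient.mk (wordAct B χ y (wordAct B χ x z)) := by
  have hD := wordDefect_mem_rel B χ hneg hpos hχ x y z
  simp only [lieDefect_apply, LinearMap.sub_apply, Module.End.mul_apply] at hD
  rwa [← Submodule.Quotient.mk_sub, Submodule.Quotient.eq, sub_mem_comm_iff]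

def inducedRep : L →ₗ⁅R⁆ Module.End R (Induced B χ) :=
  { (rel B χ).mapQLinear (rel B χ) ∘ₗ (wordAct B χ).codRestrict ((rel B χ).compatibleMaps (rel B χ))
      fun y _ hz => wordAct_mem_rel B χ hneg y hz with
    map_lie' := fun {x y} => Submodule.linearMap_qext _
      (LinearMap.ext fun z => mk_wordAct_lie B χ hneg hpos hχ x y z) }

lemma inducedRep_mk (y : L) (z : List G →₀ R) :
    inducedRep B χ hneg hpos hχ y (Submodule.Quotient.mk z) =
      Submodule.Quotient.mk (wordAct B χ y z) :=
  rfl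

lemma inducedRep_apply_inducedRep (x y : L) (v : Induced B χ) :
    inducedRep B χ hneg hpos hχ x (inducedRep B χ hneg hpos hχ y v) =
      inducedRep B χ hneg hpos hχ ⁅x, y⁆ v + inducedRep B χ hneg hpos hχ y
        (inducedRep B χ hneg hpos hχ x v) := by
  rw [LieHom.map_lie, LieRing.of_associative_ring_bracket, LinearMap.sub_apply,
    Module.End.mul_apply, Module.End.mul_apply, sub_add_cancel]

def vacuum : Induced B χ := Submodule.Quotient.mk (Finsupp.single [] 1)

lemma mk_single_cons (a : G) (l : List G) :
    (Submodule.Quotient.mk (Finsupp.single (a :: l) 1) : Induced B χ) =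
      inducedRep B χ hneg hpos hχ (B (.inl a)) (Submodule.Quotient.mk (Finsupp.single l 1)) := by
  rw [inducedRep_mk, wordAct_inl, consₗ_single]

lemma inducedRep_inr_vacuum (p : P) :
    inducedRep B χ hneg hpos hχ (B (.inr p)) (vacuum B χ) = χ p • vacuum B χ := by
  rw [vacuum, inducedRep_mk, wordAct_inr_nil, ← Submodule.Quotient.mk_smul, Finsupp.smul_single,
    smul_eq_mul, mul_one]

lemma inducedRep_inl_vacuum_ne_zero [Nontrivial R] {g₀ : G}
    (hg₀ : ∀ a b : G, ⁅B (.inl a), B (.inl b)⁆ ∈ span R (B ∘ .inl '' {g₀}ᶜ)) :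
    inducedRep B χ hneg hpos hχ (B (.inl g₀)) (vacuum B χ) ≠ 0 := by
  rw [vacuum, ← mk_single_cons, Ne, Submodule.Quotient.mk_eq_zero]
  intro h
  simpa using apply_singleton_eq_zero_of_mem_rel B χ hneg hg₀ h

def vacuumCoeff : Induced B χ →ₗ[R] R :=
  (rel B χ).liftQ (Finsupp.lapply []) fun _ hz => apply_nil_eq_zero_of_mem_rel B χ hneg hz

lemma vacuumCoeff_mk (z : List G →₀ R) :
    vacuumCoeff B χ hneg (Submodule.Quotient.mk z) = z [] :=
  rfl

lemma vacuumCoeff_vacuum : vacuumCoeff B χ hneg (vacuum B χ) = 1 := by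
  simp [vacuum, vacuumCoeff_mk]

lemma vacuumCoeff_inducedRep_inl (a : G) (v : Induced B χ) :
    vacuumCoeff B χ hneg (inducedRep B χ hneg hpos hχ (B (.inl a)) v) = 0 := by
  induction v using Submodule.Quotient.induction_on with
  | H z =>
    rw [inducedRep_mk, vacuumCoeff_mk, wordAct_inl]
    exact consₗ_apply_of_ne z fun l => List.cons_ne_nil a l

lemma vacuumCoeff_inducedRep_vacuum (y : L) :
    vacuumCoeff B χ hneg (inducedRep B χ hneg hpos hχ y (vacuum B χ)) = weight B χ y := by
  have : vacuumCoeff B χ hneg ∘ₗ LinearMap.applyₗ (vacuum B χ) ∘ₗ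
      (inducedRep B χ hneg hpos hχ : L →ₗ[R] Module.End R (Induced B χ)) = weight B χ := by
    refine B.ext fun i => ?_
    rcases i with a | p
    · simp [vacuumCoeff_inducedRep_inl, weight]
    · simp [inducedRep_inr_vacuum, vacuumCoeff_vacuum, weight]
  exact LinearMap.congr_fun this y

lemma vacuumCoeff_inducedRep_eq_zero (I : LieIdeal R L) (hI : ∀ x ∈ I, weight B χ x = 0)
    {x : L} (hx : x ∈ I) (v : Induced B χ) :
    vacuumCoeff B χ hneg (inducedRep B χ hneg hpos hχ x v) = 0 := by
  obtain ⟨z, rfl⟩ := Submodule.Quotient.mk_surjective _ v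
  induction z using Finsupp.induction_linear generalizing x with
  | zero => simp
  | add z z' hz hz' => rw [Submodule.Quotient.mk_add, map_add, map_add, hz hx, hz' hx, add_zero]
  | single l r =>
    rw [← mul_one r, ← smul_eq_mul, ← Finsupp.smul_single, Submodule.Quotient.mk_smul, map_smul,
      map_smul]
    refine (congrArg (r • ·) ?_).trans (smul_zero r)
    induction l generalizing x with
    | nil => rw [← vacuum, vacuumCoeff_inducedRep_vacuum, hI x hx]
    | cons g l ih =>
      rw [mk_single_cons B χ hneg hpos hχ, inducedRep_apply_inducedRep, map_add,
        vacuumCoeff_inducedRep_inl, add_zero]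
      exact ih (lie_mem_left R L I x _ hx)

end InducedModule

namespace DHVIdx

def IsNeg : DHVIdx → Prop
  | d m => m < 0
  | h m => m < 0
  | c => False

instance : DecidablePred IsNeg
  | d m => inferInstanceAs (Decidable (m < 0))
  | h m => inferInstanceAs (Decidable (m < 0))
  | c => inferInstanceAs (Decidable False)

def deg : DHVIdx → ℤ
  | d m => m
  | h m => m
  | c => 0

lemma isNeg_iff_deg_neg (i : DHVIdx) : IsNeg i ↔ deg i < 0 := by
  cases i <;> simp [IsNeg, deg]

-- The highest weight: `c ↦ λ` and `h₀ ↦ μ = 0`.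
def weightOf (lam : ℂ) : DHVIdx → ℂ
  | c => lam
  | _ => 0

lemma weightOf_of_isNeg (lam : ℂ) {i : DHVIdx} (hi : IsNeg i) : weightOf lam i = 0 := by
  cases i <;> simp_all [IsNeg, weightOf]

end DHVIdx

namespace DHV

open DHVIdx InducedModule

variable {g : Type*} [LieRing g] [LieAlgebra ℂ g] (B : Module.Basis DHVIdx ℂ g)
  (hdd : ∀ m n : ℤ, ⁅B (DHVIdx.d m), B (DHVIdx.d n)⁆ =
      ((m - n : ℤ) : ℂ) • B (DHVIdx.d (m + n)) +
      ((m - n : ℤ) : ℂ) • B (DHVIdx.h (m + n)) +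
      (if m + n = 0 then ((m : ℂ) ^ 3 - (m : ℂ)) / 12 else 0) • B DHVIdx.c)
  (hdh : ∀ m n : ℤ, ⁅B (DHVIdx.d m), B (DHVIdx.h n)⁆ =
      ((-n : ℤ) : ℂ) • B (DHVIdx.h (m + n)))
  (hhh : ∀ m n : ℤ, ⁅B (DHVIdx.h m), B (DHVIdx.h n)⁆ = 0)
  (hcen : ∀ x : g, ⁅x, B DHVIdx.c⁆ = 0)

include hdd hdh hhh hcen in
lemma lie_basis_mem_span_deg (i j : DHVIdx) :
    ⁅B i, B j⁆ ∈ span ℂ (B '' {k | deg k = deg i + deg j}) := by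
  have hB (k : DHVIdx) (hk : deg k = deg i + deg j) :
      B k ∈ span ℂ (B '' {k | deg k = deg i + deg j}) :=
    subset_span ⟨k, hk, rfl⟩
  rcases i with m | m | _ <;> rcases j with n | n | _
  · rw [hdd]
    refine add_mem (add_mem (smul_mem _ _ (hB _ rfl)) (smul_mem _ _ (hB _ rfl))) ?_
    split_ifs with hmn
    · exact smul_mem _ _ (hB _ (by simp [deg, hmn]))
    · simp
  · rw [hdh]
    exact smul_mem _ _ (hB _ rfl)
  · simp [hcen]
  · rw [← lie_skew, hdh]
    exact neg_mem (smul_mem _ _ (hB _ (by simp [deg, add_comm])))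
  · simp [hhh]
  · simp [hcen]
  all_goals rw [← lie_skew, hcen, neg_zero]; exact zero_mem _

def splitBasis : Module.Basis ({i // IsNeg i} ⊕ {i // ¬IsNeg i}) ℂ g :=
  B.reindex (Equiv.sumCompl IsNeg).symm

@[simp]
lemma splitBasis_inl (i : {i // IsNeg i}) : splitBasis B (.inl i) = B i := by
  simp [splitBasis]

@[simp]
lemma splitBasis_inr (i : {i // ¬IsNeg i}) : splitBasis B (.inr i) = B i := by
  simp [splitBasis]

def hwWeight (lam : ℂ) (i : {i // ¬IsNeg i}) : ℂ := weightOf lam i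

lemma weight_splitBasis (lam : ℂ) (i : DHVIdx) :
    weight (splitBasis B) (hwWeight lam) (B i) = weightOf lam i := by
  by_cases hi : IsNeg i
  · rw [← splitBasis_inl B ⟨i, hi⟩, weightOf_of_isNeg lam hi, weight,
      Module.Basis.constr_basis, Sum.elim_inl, Pi.zero_apply]
  · rw [← splitBasis_inr B ⟨i, hi⟩, weight, Module.Basis.constr_basis, Sum.elim_inr,
      hwWeight]

include hdd hdh hhh hcen in
lemma lie_splitBasis_inl_mem_span (a b : {i // IsNeg i}) :
    ⁅splitBasis B (.inl a), splitBasis B (.inl b)⁆ ∈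
      span ℂ (splitBasis B ∘ .inl '' {⟨h (-1), by simp [IsNeg]⟩}ᶜ) := by
  have ha := (isNeg_iff_deg_neg _).mp a.2
  have hb := (isNeg_iff_deg_neg _).mp b.2
  rw [splitBasis_inl, splitBasis_inl]
  refine span_mono ?_ (lie_basis_mem_span_deg B hdd hdh hhh hcen a b)
  rintro _ ⟨k, hk, rfl⟩
  have hk : deg k = deg a + deg b := hk
  refine ⟨⟨k, (isNeg_iff_deg_neg k).mpr (by omega)⟩, fun h1 => ?_, splitBasis_inl B _⟩
  obtain rfl := congrArg Subtype.val (Set.mem_singleton_iff.mp h1)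
  change -1 = _ at hk
  omega

include hdd hdh hhh hcen in
lemma lie_splitBasis_inr_mem_span (p q : {i // ¬IsNeg i}) :
    ⁅splitBasis B (.inr p), splitBasis B (.inr q)⁆ ∈ posSpan (splitBasis B) := by
  have hp := (isNeg_iff_deg_neg _).not.mp p.2
  have hq := (isNeg_iff_deg_neg _).not.mp q.2
  rw [splitBasis_inr, splitBasis_inr]
  refine span_mono ?_ (lie_basis_mem_span_deg B hdd hdh hhh hcen p q)
  rintro _ ⟨k, hk, rfl⟩
  have hk : deg k = deg p + deg q := hk
  exact ⟨⟨k, (isNeg_iff_deg_neg k).not.mpr (by omega)⟩, splitBasis_inr B _⟩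

include hdd hdh hhh hcen in
lemma weight_lie_splitBasis_inr (lam : ℂ) (p q : {i // ¬IsNeg i}) :
    weight (splitBasis B) (hwWeight lam)
      ⁅splitBasis B (.inr p), splitBasis B (.inr q)⁆ = 0 := by
  obtain ⟨i, hi⟩ := p
  obtain ⟨j, hj⟩ := q
  simp only [splitBasis_inr]
  rcases i with m | m | _ <;> rcases j with n | n | _
  · have hm : 0 ≤ m := by simpa [IsNeg] using hi
    have hn : 0 ≤ n := by simpa [IsNeg] using hj
    rw [hdd]
    simp only [map_add, map_smul, weight_splitBasis, weightOf, smul_eq_mul]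
    split_ifs with hmn
    · obtain rfl : m = 0 := by omega
      simp
    · simp
  · simp [hdh, weight_splitBasis, weightOf]
  · simp [hcen]
  · rw [← lie_skew, hdh]
    simp [weight_splitBasis, weightOf]
  · simp [hhh]
  · simp [hcen]
  all_goals rw [← lie_skew, hcen, neg_zero, map_zero]

def heisenbergIdeal : LieIdeal ℂ g :=
  { span ℂ (Set.range fun n => B (h n)) with
    lie_mem := fun {x m} hm => by
      refine (LieModule.toEnd ℂ g g : g →ₗ[ℂ] Module.End ℂ g).apply_mem_of_mem_span₂
        (s := Set.range B) ?_ (B.mem_span x) hm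
      rintro _ ⟨i, rfl⟩ _ ⟨n, rfl⟩
      change ⁅B i, B (h n)⁆ ∈ _
      rcases i with k | k | _
      · rw [hdh]
        exact smul_mem _ _ (subset_span ⟨_, rfl⟩)
      · rw [hhh]
        exact zero_mem _
      · rw [← lie_skew, hcen, neg_zero]
        exact zero_mem _ }

lemma h_mem_heisenbergIdeal (n : ℤ) : B (h n) ∈ heisenbergIdeal B hdh hhh hcen :=
  subset_span ⟨n, rfl⟩

lemma weight_eq_zero_of_mem_heisenbergIdeal (lam : ℂ) {x : g}
    (hx : x ∈ heisenbergIdeal B hdh hhh hcen) :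
    weight (splitBasis B) (hwWeight lam) x = 0 := by
  induction hx using span_induction with
  | mem x hx =>
    obtain ⟨n, rfl⟩ := hx
    rw [weight_splitBasis]
    rfl
  | zero => simp
  | add x y _ _ hx hy => simp [hx, hy]
  | smul r x _ hx => simp [hx]

include hdd hdh hhh hcen in
lemma lie_splitBasis_inl_mem_negSpan (a b : {i // IsNeg i}) :
    ⁅splitBasis B (.inl a), splitBasis B (.inl b)⁆ ∈ negSpan (splitBasis B) :=
  span_mono (Set.image_subset_range _ _) (lie_splitBasis_inl_mem_span B hdd hdh hhh hcen a b)

def vermaRep (lam : ℂ) : g →ₗ⁅ℂ⁆ Module.End ℂ (Induced (splitBasis B) (hwWeight lam)) :=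
  inducedRep _ _ (lie_splitBasis_inl_mem_negSpan B hdd hdh hhh hcen)
    (lie_splitBasis_inr_mem_span B hdd hdh hhh hcen)
    (weight_lie_splitBasis_inr B hdd hdh hhh hcen lam)

lemma vermaRep_vacuum (lam : ℂ) {i : DHVIdx} (hi : ¬IsNeg i) :
    vermaRep B hdd hdh hhh hcen lam (B i) (vacuum _ _) = weightOf lam i • vacuum _ _ := by
  rw [vermaRep, ← splitBasis_inr B ⟨i, hi⟩, inducedRep_inr_vacuum]
  rfl

lemma vermaRep_h_neg_one_vacuum_ne_zero (lam : ℂ) :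
    vermaRep B hdd hdh hhh hcen lam (B (h (-1))) (vacuum _ _) ≠ 0 := by
  rw [← splitBasis_inl B ⟨h (-1), by simp [IsNeg]⟩]
  exact inducedRep_inl_vacuum_ne_zero _ _ _ _ _ (lie_splitBasis_inl_mem_span B hdd hdh hhh hcen)

lemma vacuumCoeff_vermaRep_eq_zero (lam : ℂ) {x : g} (hx : x ∈ heisenbergIdeal B hdh hhh hcen)
    (v : Induced (splitBasis B) (hwWeight lam)) :
    vacuumCoeff _ _ (lie_splitBasis_inl_mem_negSpan B hdd hdh hhh hcen)
      (vermaRep B hdd hdh hhh hcen lam x v) = 0 :=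
  vacuumCoeff_inducedRep_eq_zero _ _ _ _ _ _
    (fun _ hy => weight_eq_zero_of_mem_heisenbergIdeal B hdh hhh hcen lam hy) hx v

include hdd hdh hhh hcen in
theorem exists_highestWeight_module (lam : ℂ) :
    ∃ (N : Type u) (_ : AddCommGroup N) (_ : Module ℂ N) (_ : LieRingModule g N)
      (_ : LieModule ℂ g N) (u₀ : N) (K : LieSubmodule ℂ g N),
      ⁅B c, u₀⁆ = lam • u₀ ∧ ⁅B (h 0), u₀⁆ = (0 : ℂ) • u₀ ∧ (∀ i : ℕ, ⁅B (d i), u₀⁆ = 0) ∧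
      (∀ i : ℕ, 1 ≤ i → ⁅B (h i), u₀⁆ = 0) ∧ ⁅B (h (-1)), u₀⁆ ≠ 0 ∧
      ⁅B (h (-1)), u₀⁆ ∈ K ∧ u₀ ∉ K := by
  set V := Induced (splitBasis B) (hwWeight lam)
  set ρ := vermaRep B hdd hdh hhh hcen lam
  let e : V ≃ₗ[ℂ] ULift.{u} V := ULift.moduleEquiv.symm
  let _ := LieRingModule.compLieHom (ULift.{u} V) (e.lieConj.toLieHom.comp ρ)
  let _ := LieModule.compLieHom (ULift.{u} V) (e.lieConj.toLieHom.comp ρ)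
  have hbr (x : g) (v : V) : ⁅x, ULift.up.{u} v⁆ = ULift.up (ρ x v) := rfl
  have hvac (i : DHVIdx) (hi : ¬IsNeg i) :
      ⁅B i, ULift.up.{u} (vacuum _ _ : V)⁆ = weightOf lam i • ULift.up (vacuum _ _ : V) := by
    rw [hbr, vermaRep_vacuum B hdd hdh hhh hcen lam hi]
    rfl
  refine ⟨ULift.{u} V, inferInstance, inferInstance, inferInstance, inferInstance,
    ULift.up (vacuum _ _), ⁅heisenbergIdeal B hdh hhh hcen, ⊤⁆,
    hvac c (by simp [IsNeg]), hvac (h 0) (by simp [IsNeg]),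
    fun i => (hvac (d i) (by simp [IsNeg])).trans (zero_smul _ _),
    fun i _ => (hvac (h i) (by simp [IsNeg])).trans (zero_smul _ _),
    fun h0 => vermaRep_h_neg_one_vacuum_ne_zero B hdd hdh hhh hcen lam (congrArg ULift.down h0),
    LieSubmodule.lie_mem_lie (h_mem_heisenbergIdeal B hdh hhh hcen _) (LieSubmodule.mem_top _),
    fun hmem => ?_⟩
  let ε := vacuumCoeff _ _ (lie_splitBasis_inl_mem_negSpan B hdd hdh hhh hcen) ∘ₗ
    (ULift.moduleEquiv.{0, 0, u} : ULift.{u} V ≃ₗ[ℂ] V).toLinearMap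
  have hle : (⁅heisenbergIdeal B hdh hhh hcen, ⊤⁆ : LieSubmodule ℂ g (ULift.{u} V)).toSubmodule ≤
      LinearMap.ker ε := by
    rw [LieSubmodule.lieIdeal_oper_eq_linear_span', span_le]
    rintro _ ⟨x, hx, n, -, rfl⟩
    exact vacuumCoeff_vermaRep_eq_zero B hdd hdh hhh hcen lam hx n.down
  simpa [ε, vacuumCoeff_vacuum] using hle hmem

section HighestWeightVector

variable {M : Type*} [AddCommGroup M] [LieRingModule g M] {w : M}
  (hh0w : ⁅B (h 0), w⁆ = 0) (hhw : ∀ i : ℕ, 1 ≤ i → ⁅B (h i), w⁆ = 0)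
include hh0w hhw

lemma lie_h_natCast_eq_zero (m : ℕ) : ⁅B (h m), w⁆ = 0 := by
  rcases Nat.eq_zero_or_pos m with rfl | hm
  · exact hh0w
  · exact hhw m hm

include hdh in
lemma exists_lie_d_lie_h_neg_one_eq_smul [Module ℂ M] [LieModule ℂ g M]
    (hdw : ∀ i : ℕ, ⁅B (d i), w⁆ = 0) (m : ℕ) :
    ∃ a : ℂ, ⁅B (d m), ⁅B (h (-1)), w⁆⁆ = a • ⁅B (h (-1)), w⁆ := by
  rw [leibniz_lie, hdw, lie_zero, add_zero, hdh, smul_lie]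
  rcases Nat.eq_zero_or_pos m with rfl | hm
  · exact ⟨1, by norm_num⟩
  · refine ⟨0, ?_⟩
    rw [show (m : ℤ) + -1 = ((m - 1 : ℕ) : ℤ) by omega, lie_h_natCast_eq_zero B hh0w hhw,
      smul_zero, zero_smul]

include hhh in
lemma lie_h_lie_h_neg_one_eq_zero (m : ℕ) : ⁅B (h m), ⁅B (h (-1)), w⁆⁆ = 0 := by
  rw [leibniz_lie, hhh, zero_lie, zero_add, lie_h_natCast_eq_zero B hh0w hhw, lie_zero]

end HighestWeightVector

end DHV

end

theorem dhv_generalized_verma_not_simple_general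
 {g : Type*} [LieRing g] [LieAlgebra ℂ g]
    (B : Module.Basis DHVIdx ℂ g)
    (hdd : ∀ m n : ℤ, ⁅B (DHVIdx.d m), B (DHVIdx.d n)⁆ =
      ((m - n : ℤ) : ℂ) • B (DHVIdx.d (m + n)) +
      ((m - n : ℤ) : ℂ) • B (DHVIdx.h (m + n)) +
      (if m + n = 0 then ((m : ℂ) ^ 3 - (m : ℂ)) / 12 else 0) • B DHVIdx.c)
    (hdh : ∀ m n : ℤ, ⁅B (DHVIdx.d m), B (DHVIdx.h n)⁆ =
      ((-n : ℤ) : ℂ) • B (DHVIdx.h (m + n)))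
    (hhh : ∀ m n : ℤ, ⁅B (DHVIdx.h m), B (DHVIdx.h n)⁆ = 0)
    (hcen : ∀ x : g, ⁅x, B DHVIdx.c⁆ = 0)
    (lam mu : ℂ)
    (M : Type u) [AddCommGroup M] [Module ℂ M] [LieRingModule g M]
    [LieModule ℂ g M] (w : M)
    (hh0w : ⁅B (DHVIdx.h 0), w⁆ = mu • w)
    (hdw : ∀ i : ℕ, ⁅B (DHVIdx.d i), w⁆ = 0)
    (hhw : ∀ i : ℕ, 1 ≤ i → ⁅B (DHVIdx.h i), w⁆ = 0)
    (huniv : ∀ (N : Type u) [AddCommGroup N] [Module ℂ N] [LieRingModule g N]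
      [LieModule ℂ g N] (u : N),
      ⁅B DHVIdx.c, u⁆ = lam • u → ⁅B (DHVIdx.h 0), u⁆ = mu • u →
      (∀ i : ℕ, ⁅B (DHVIdx.d i), u⁆ = 0) →
      (∀ i : ℕ, 1 ≤ i → ⁅B (DHVIdx.h i), u⁆ = 0) →
      ∃! f : M →ₗ⁅ℂ,g⁆ N, f w = u)
    (hmu : mu = 0) :
    (∀ m : ℕ, ∃ a : ℂ, ⁅B (DHVIdx.d m), ⁅B (DHVIdx.h (-1)), w⁆⁆ =
      a • ⁅B (DHVIdx.h (-1)), w⁆) ∧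
    (∀ m : ℕ, ∃ b : ℂ, ⁅B (DHVIdx.h m), ⁅B (DHVIdx.h (-1)), w⁆⁆ =
      b • ⁅B (DHVIdx.h (-1)), w⁆) ∧
    LieSubmodule.lieSpan ℂ g ({⁅B (DHVIdx.h (-1)), w⁆} : Set M) ≠ ⊥ ∧
    LieSubmodule.lieSpan ℂ g ({⁅B (DHVIdx.h (-1)), w⁆} : Set M) ≠ ⊤ := by
  subst hmu
  have hh0w' : ⁅B (DHVIdx.h 0), w⁆ = 0 := by rw [hh0w, zero_smul]
  obtain ⟨N, _, _, _, _, u₀, K, hc, hh0, hd, hh, hy_ne, hy_mem, hu₀⟩ :=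
    DHV.exists_highestWeight_module.{u} B hdd hdh hhh hcen lam
  obtain ⟨f, hf, -⟩ := huniv N u₀ hc hh0 hd hh
  have hfy : f ⁅B (DHVIdx.h (-1)), w⁆ = ⁅B (DHVIdx.h (-1)), u₀⁆ := by rw [LieModuleHom.map_lie, hf]
  refine ⟨DHV.exists_lie_d_lie_h_neg_one_eq_smul B hdh hh0w' hhw hdw,
    fun m => ⟨0, by rw [zero_smul, DHV.lie_h_lie_h_neg_one_eq_zero B hhh hh0w' hhw]⟩, ?_, ?_⟩
  · rw [Ne, LieSubmodule.lieSpan_eq_bot_iff]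
    intro hbot
    exact hy_ne (by rw [← hfy, hbot _ rfl, map_zero])
  · intro htop
    have hle : LieSubmodule.lieSpan ℂ g {⁅B (DHVIdx.h (-1)), w⁆} ≤ K.comap f :=
      LieSubmodule.lieSpan_le.mpr (Set.singleton_subset_iff.mpr (by simpa [hfy] using hy_mem))
    rw [htop] at hle
    exact hu₀ (hf ▸ hle (LieSubmodule.mem_top w))

/-- In the generalized Verma module `Ind₀(ℂ v_{λμ})` (characterised by its
universal property: it is generated by `w` with `c w = λ w`, `h₀ w = μ w`,
`dᵢ w = 0` for `i ≥ 0` and `hᵢ w = 0` for `i ≥ 1`), if `μ = 0`, then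
`y = h₋₁ w` satisfies `d_m y, h_m y ∈ ℂ y` for all `m ≥ 0`, and `y` generates
a nonzero proper submodule. -/
theorem dhv_generalized_verma_not_simple
 {g : Type*} [LieRing g] [LieAlgebra ℂ g]
    (B : Module.Basis DHVIdx ℂ g)
    (hdd : ∀ m n : ℤ, ⁅B (DHVIdx.d m), B (DHVIdx.d n)⁆ =
      ((m - n : ℤ) : ℂ) • B (DHVIdx.d (m + n)) +
      ((m - n : ℤ) : ℂ) • B (DHVIdx.h (m + n)) +
      (if m + n = 0 then ((m : ℂ) ^ 3 - (m : ℂ)) / 12 else 0) • B DHVIdx.c)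
    (hdh : ∀ m n : ℤ, ⁅B (DHVIdx.d m), B (DHVIdx.h n)⁆ =
      ((-n : ℤ) : ℂ) • B (DHVIdx.h (m + n)))
    (hhh : ∀ m n : ℤ, ⁅B (DHVIdx.h m), B (DHVIdx.h n)⁆ = 0)
    (hcen : ∀ x : g, ⁅x, B DHVIdx.c⁆ = 0)
    (lam mu : ℂ)
    (M : Type u) [AddCommGroup M] [Module ℂ M] [LieRingModule g M]
    [LieModule ℂ g M] (w : M)
    (hcw : ⁅B DHVIdx.c, w⁆ = lam • w)
    (hh0w : ⁅B (DHVIdx.h 0), w⁆ = mu • w)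
    (hdw : ∀ i : ℕ, ⁅B (DHVIdx.d i), w⁆ = 0)
    (hhw : ∀ i : ℕ, 1 ≤ i → ⁅B (DHVIdx.h i), w⁆ = 0)
    (huniv : ∀ (N : Type u) [AddCommGroup N] [Module ℂ N] [LieRingModule g N]
      [LieModule ℂ g N] (u : N),
      ⁅B DHVIdx.c, u⁆ = lam • u → ⁅B (DHVIdx.h 0), u⁆ = mu • u →
      (∀ i : ℕ, ⁅B (DHVIdx.d i), u⁆ = 0) →
      (∀ i : ℕ, 1 ≤ i → ⁅B (DHVIdx.h i), u⁆ = 0) →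
      ∃! f : M →ₗ⁅ℂ,g⁆ N, f w = u)
    (hmu : mu = 0) :
    (∀ m : ℕ, ∃ a : ℂ, ⁅B (DHVIdx.d m), ⁅B (DHVIdx.h (-1)), w⁆⁆ =
      a • ⁅B (DHVIdx.h (-1)), w⁆) ∧
    (∀ m : ℕ, ∃ b : ℂ, ⁅B (DHVIdx.h m), ⁅B (DHVIdx.h (-1)), w⁆⁆ =
      b • ⁅B (DHVIdx.h (-1)), w⁆) ∧
    LieSubmodule.lieSpan ℂ g ({⁅B (DHVIdx.h (-1)), w⁆} : Set M) ≠ ⊥ ∧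
    LieSubmodule.lieSpan ℂ g ({⁅B (DHVIdx.h (-1)), w⁆} : Set M) ≠ ⊤ :=
  dhv_generalized_verma_not_simple_general B hdd hdh hhh hcen lam mu M w hh0w hdw hhw huniv hmu
end

section
/- Let S be a simple L-module on which h_0 acts as a nonzero scalar. Suppose there exists t ∈ ℤ₊ such that the actions of d_i and h_i on S are locally finite for all i ≥ t, and let v ∈ S be a nonzero eigenvector of d_t with d_t v = λv. Then for every j > t, the subspaces Σ_{m∈ℤ₊} ℂ h_{j+mt} v and Σ_{m∈ℤ₊} ℂ d_{j+mt} v are finite-dimensional; more precisely, h_{j+mt}v ∈ U(ℂd_t)h_j v and d_{j+mt}v ∈ U(ℂd_t)d_j v + U(ℂd_t)h_j v for all m ∈ ℤ₊. -/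
open Module.End

section LieModule

variable {R g M : Type*} [CommRing R] [LieRing g] [AddCommGroup M] [Module R M]
  [LieRingModule g M]

variable (R) in
/-- `U(R x) s` in the paper's notation. -/
def lieIterSpan (x : g) (s : M) : Submodule R M :=
  Submodule.span R (Set.range fun n : ℕ => (fun w : M => ⁅x, w⁆)^[n] s)

lemma self_mem_lieIterSpan (x : g) (s : M) : s ∈ lieIterSpan R x s :=
  Submodule.subset_span ⟨0, rfl⟩

variable [LieAlgebra R g] [LieModule R g M]

lemma lieIterSpan_mem_invtSubmodule (x : g) (s : M) :
    lieIterSpan R x s ∈ invtSubmodule (LieModule.toEnd R g M x) := by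
  rw [mem_invtSubmodule, lieIterSpan, Submodule.span_le]
  rintro _ ⟨n, rfl⟩
  exact Submodule.subset_span ⟨n + 1, Function.iterate_succ_apply' _ n s⟩

lemma lie_lie_mem_of_eigenvector {N : Submodule R M} {x : g}
    (hN : N ∈ invtSubmodule (LieModule.toEnd R g M x)) {v : M} {lam : R}
    (hv : ⁅x, v⁆ = lam • v) {y : g} (hy : ⁅y, v⁆ ∈ N) : ⁅⁅x, y⁆, v⁆ ∈ N := by
  rw [lie_lie, hv, lie_smul]
  exact N.sub_mem (hN hy) (N.smul_mem lam hy)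

end LieModule

section DHV

variable {K g M : Type*} [Field K] [CharZero K] [LieRing g] [LieAlgebra K g]
  [AddCommGroup M] [Module K M] [LieRingModule g M] [LieModule K g M]
  {e : DHVIdx → g} {N : Submodule K M} {t : ℤ} {v : M} {lam : K}

lemma lie_h_add_mem_of_eigenvector
    (hdh : ∀ m n : ℤ, ⁅e (DHVIdx.d m), e (DHVIdx.h n)⁆ = ((-n : ℤ) : K) • e (DHVIdx.h (m + n)))
    (hN : N ∈ invtSubmodule (LieModule.toEnd K g M (e (DHVIdx.d t))))
    (hv : ⁅e (DHVIdx.d t), v⁆ = lam • v) {n : ℤ} (hn : n ≠ 0)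
    (hmem : ⁅e (DHVIdx.h n), v⁆ ∈ N) : ⁅e (DHVIdx.h (t + n)), v⁆ ∈ N := by
  have hbr := lie_lie_mem_of_eigenvector hN hv hmem
  rw [hdh, smul_lie] at hbr
  exact (N.smul_mem_iff (by exact_mod_cast neg_ne_zero.2 hn)).1 hbr

lemma lie_d_add_mem_of_eigenvector
    (hdd : ∀ m n : ℤ, ⁅e (DHVIdx.d m), e (DHVIdx.d n)⁆ =
      ((m - n : ℤ) : K) • e (DHVIdx.d (m + n)) +
      ((m - n : ℤ) : K) • e (DHVIdx.h (m + n)) +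
      (if m + n = 0 then ((m : K) ^ 3 - (m : K)) / 12 else 0) • e DHVIdx.c)
    (hN : N ∈ invtSubmodule (LieModule.toEnd K g M (e (DHVIdx.d t))))
    (hv : ⁅e (DHVIdx.d t), v⁆ = lam • v) {n : ℤ} (hn : t ≠ n) (hn' : t + n ≠ 0)
    (hmem : ⁅e (DHVIdx.d n), v⁆ ∈ N) (hmemh : ⁅e (DHVIdx.h (t + n)), v⁆ ∈ N) :
    ⁅e (DHVIdx.d (t + n)), v⁆ ∈ N := by
  have hbr := lie_lie_mem_of_eigenvector hN hv hmem
  rw [hdd, if_neg hn', zero_smul, add_zero, ← smul_add, smul_lie, add_lie] at hbr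
  have hsum := (N.smul_mem_iff (by exact_mod_cast sub_ne_zero.2 hn)).1 hbr
  simpa only [add_sub_cancel_right] using N.sub_mem hsum hmemh

lemma lie_h_add_mul_mem
    (hdh : ∀ m n : ℤ, ⁅e (DHVIdx.d m), e (DHVIdx.h n)⁆ = ((-n : ℤ) : K) • e (DHVIdx.h (m + n)))
    (hN : N ∈ invtSubmodule (LieModule.toEnd K g M (e (DHVIdx.d t))))
    (hv : ⁅e (DHVIdx.d t), v⁆ = lam • v) (ht : 0 ≤ t) {j : ℤ} (hj : 0 < j)
    (hmem : ⁅e (DHVIdx.h j), v⁆ ∈ N) (m : ℕ) : ⁅e (DHVIdx.h (j + m * t)), v⁆ ∈ N := by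
  induction m with
  | zero => simpa using hmem
  | succ m ih =>
    have hnext := lie_h_add_mem_of_eigenvector hdh hN hv (by positivity) ih
    rwa [show t + (j + m * t) = j + ↑(m + 1) * t by push_cast; ring] at hnext

lemma lie_d_add_mul_mem
    (hdd : ∀ m n : ℤ, ⁅e (DHVIdx.d m), e (DHVIdx.d n)⁆ =
      ((m - n : ℤ) : K) • e (DHVIdx.d (m + n)) +
      ((m - n : ℤ) : K) • e (DHVIdx.h (m + n)) +
      (if m + n = 0 then ((m : K) ^ 3 - (m : K)) / 12 else 0) • e DHVIdx.c)
    (hdh : ∀ m n : ℤ, ⁅e (DHVIdx.d m), e (DHVIdx.h n)⁆ = ((-n : ℤ) : K) • e (DHVIdx.h (m + n)))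
    (hN : N ∈ invtSubmodule (LieModule.toEnd K g M (e (DHVIdx.d t))))
    (hv : ⁅e (DHVIdx.d t), v⁆ = lam • v) (ht : 0 ≤ t) {j : ℤ} (hj : t < j)
    (hmem : ⁅e (DHVIdx.d j), v⁆ ∈ N) (hmemh : ⁅e (DHVIdx.h j), v⁆ ∈ N) (m : ℕ) :
    ⁅e (DHVIdx.d (j + m * t)), v⁆ ∈ N := by
  induction m with
  | zero => simpa using hmem
  | succ m ih =>
    have hidx : t + (j + m * t) = j + ↑(m + 1) * t := by push_cast; ring
    have hh := lie_h_add_mul_mem hdh hN hv ht (by omega) hmemh (m + 1)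
    rw [← hidx] at hh ⊢
    exact lie_d_add_mem_of_eigenvector hdd hN hv (by nlinarith) (by nlinarith) ih hh

end DHV

theorem dhv_locally_finite_estimates_general
 {g : Type*} [LieRing g] [LieAlgebra ℂ g]
    (B : Module.Basis DHVIdx ℂ g)
    (hdd : ∀ m n : ℤ, ⁅B (DHVIdx.d m), B (DHVIdx.d n)⁆ =
      ((m - n : ℤ) : ℂ) • B (DHVIdx.d (m + n)) +
      ((m - n : ℤ) : ℂ) • B (DHVIdx.h (m + n)) +
      (if m + n = 0 then ((m : ℂ) ^ 3 - (m : ℂ)) / 12 else 0) • B DHVIdx.c)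
    (hdh : ∀ m n : ℤ, ⁅B (DHVIdx.d m), B (DHVIdx.h n)⁆ =
      ((-n : ℤ) : ℂ) • B (DHVIdx.h (m + n)))
    (S : Type*) [AddCommGroup S] [Module ℂ S] [LieRingModule g S]
    [LieModule ℂ g S]
    (t : ℕ)
    (hlf : ∀ i : ℤ, (t : ℤ) ≤ i → ∀ s : S,
      FiniteDimensional ℂ (Submodule.span ℂ (Set.range fun n : ℕ =>
        (fun w : S => ⁅B (DHVIdx.d i), w⁆)^[n] s)) ∧
      FiniteDimensional ℂ (Submodule.span ℂ (Set.range fun n : ℕ =>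
        (fun w : S => ⁅B (DHVIdx.h i), w⁆)^[n] s)))
    (v : S) (lam : ℂ)
    (heig : ⁅B (DHVIdx.d t), v⁆ = lam • v) :
    ∀ j : ℤ, (t : ℤ) < j → ∀ Nd Nh : Submodule ℂ S,
      Nd = Submodule.span ℂ (Set.range fun n : ℕ =>
        (fun w : S => ⁅B (DHVIdx.d t), w⁆)^[n] ⁅B (DHVIdx.d j), v⁆) →
      Nh = Submodule.span ℂ (Set.range fun n : ℕ =>
        (fun w : S => ⁅B (DHVIdx.d t), w⁆)^[n] ⁅B (DHVIdx.h j), v⁆) →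
      (∀ m : ℕ, ⁅B (DHVIdx.h (j + m * t)), v⁆ ∈ Nh) ∧
      (∀ m : ℕ, ⁅B (DHVIdx.d (j + m * t)), v⁆ ∈ Nd ⊔ Nh) ∧
      FiniteDimensional ℂ (Submodule.span ℂ
        (Set.range fun m : ℕ => ⁅B (DHVIdx.h (j + m * t)), v⁆)) ∧
      FiniteDimensional ℂ (Submodule.span ℂ
        (Set.range fun m : ℕ => ⁅B (DHVIdx.d (j + m * t)), v⁆)) := by
  intro j hj Nd Nh hNd hNh
  have ht : (0 : ℤ) ≤ t := Int.natCast_nonneg t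
  have hinvd : Nd ∈ invtSubmodule (LieModule.toEnd ℂ g S (B (DHVIdx.d t))) := by
    rw [hNd]; exact lieIterSpan_mem_invtSubmodule _ _
  have hinvh : Nh ∈ invtSubmodule (LieModule.toEnd ℂ g S (B (DHVIdx.d t))) := by
    rw [hNh]; exact lieIterSpan_mem_invtSubmodule _ _
  have hdj : ⁅B (DHVIdx.d j), v⁆ ∈ Nd := by rw [hNd]; exact self_mem_lieIterSpan _ _
  have hhj : ⁅B (DHVIdx.h j), v⁆ ∈ Nh := by rw [hNh]; exact self_mem_lieIterSpan _ _
  have memH := lie_h_add_mul_mem hdh hinvh heig ht (by omega) hhj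
  have memD := lie_d_add_mul_mem hdd hdh (Sublattice.sup_mem hinvd hinvh) heig ht hj
    (Submodule.mem_sup_left hdj) (Submodule.mem_sup_right hhj)
  have : FiniteDimensional ℂ Nd := hNd ▸ (hlf t le_rfl _).1
  have : FiniteDimensional ℂ Nh := hNh ▸ (hlf t le_rfl _).1
  exact ⟨memH, memD,
    Submodule.finiteDimensional_of_le (Submodule.span_le.2 (Set.range_subset_iff.2 memH)),
    Submodule.finiteDimensional_of_le (Submodule.span_le.2 (Set.range_subset_iff.2 memD))⟩

/-- Let `S` be a simple `L`-module on which `h₀` acts as a nonzero scalar and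
on which `dᵢ, hᵢ` act locally finitely for `i ≥ t`, and let `v ≠ 0` be an
eigenvector of `d_t`.  Then for each `j > t` and `m ≥ 0` one has
`h_{j+mt} v ∈ U(ℂ d_t) h_j v` and `d_{j+mt} v ∈ U(ℂ d_t) d_j v + U(ℂ d_t) h_j v`;
in particular `Σ_m ℂ h_{j+mt} v` and `Σ_m ℂ d_{j+mt} v` are finite-dimensional. -/
theorem dhv_locally_finite_estimates
 {g : Type*} [LieRing g] [LieAlgebra ℂ g]
    (B : Module.Basis DHVIdx ℂ g)
    (hdd : ∀ m n : ℤ, ⁅B (DHVIdx.d m), B (DHVIdx.d n)⁆ =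
      ((m - n : ℤ) : ℂ) • B (DHVIdx.d (m + n)) +
      ((m - n : ℤ) : ℂ) • B (DHVIdx.h (m + n)) +
      (if m + n = 0 then ((m : ℂ) ^ 3 - (m : ℂ)) / 12 else 0) • B DHVIdx.c)
    (hdh : ∀ m n : ℤ, ⁅B (DHVIdx.d m), B (DHVIdx.h n)⁆ =
      ((-n : ℤ) : ℂ) • B (DHVIdx.h (m + n)))
    (hhh : ∀ m n : ℤ, ⁅B (DHVIdx.h m), B (DHVIdx.h n)⁆ = 0)
    (hcen : ∀ x : g, ⁅x, B DHVIdx.c⁆ = 0)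
    (S : Type*) [AddCommGroup S] [Module ℂ S] [LieRingModule g S]
    [LieModule ℂ g S]
    (hsimple : ∀ N : LieSubmodule ℂ g S, N = ⊥ ∨ N = ⊤) (hnt : Nontrivial S)
    (mu : ℂ) (hmu : mu ≠ 0) (hh0 : ∀ s : S, ⁅B (DHVIdx.h 0), s⁆ = mu • s)
    (t : ℕ)
    (hlf : ∀ i : ℤ, (t : ℤ) ≤ i → ∀ s : S,
      FiniteDimensional ℂ (Submodule.span ℂ (Set.range fun n : ℕ =>
        (fun w : S => ⁅B (DHVIdx.d i), w⁆)^[n] s)) ∧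
      FiniteDimensional ℂ (Submodule.span ℂ (Set.range fun n : ℕ =>
        (fun w : S => ⁅B (DHVIdx.h i), w⁆)^[n] s)))
    (v : S) (hv : v ≠ 0) (lam : ℂ)
    (heig : ⁅B (DHVIdx.d t), v⁆ = lam • v) :
    ∀ j : ℤ, (t : ℤ) < j → ∀ Nd Nh : Submodule ℂ S,
      Nd = Submodule.span ℂ (Set.range fun n : ℕ =>
        (fun w : S => ⁅B (DHVIdx.d t), w⁆)^[n] ⁅B (DHVIdx.d j), v⁆) →
      Nh = Submodule.span ℂ (Set.range fun n : ℕ =>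
        (fun w : S => ⁅B (DHVIdx.d t), w⁆)^[n] ⁅B (DHVIdx.h j), v⁆) →
      (∀ m : ℕ, ⁅B (DHVIdx.h (j + m * t)), v⁆ ∈ Nh) ∧
      (∀ m : ℕ, ⁅B (DHVIdx.d (j + m * t)), v⁆ ∈ Nd ⊔ Nh) ∧
      FiniteDimensional ℂ (Submodule.span ℂ
        (Set.range fun m : ℕ => ⁅B (DHVIdx.h (j + m * t)), v⁆)) ∧
      FiniteDimensional ℂ (Submodule.span ℂ
        (Set.range fun m : ℕ => ⁅B (DHVIdx.d (j + m * t)), v⁆)) :=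
  dhv_locally_finite_estimates_general B hdd hdh S t hlf v lam heig
end
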